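/- arXiv:2208.07901 — 8 statements merged into one kernel-verified Lean document; each statement's English description precedes it below -/
import Mathlib

section
/- Let N = 2, let h > 0, x₁ < x₂ be real, ℓ = x₂ − x₁, and let V₁, V₂ be nonzero real constants. Let z ∈ ℂ \ {0} be such that Ṽ₁ ≠ 1 and Ṽ₂ ≠ 1. Then z is a resonance of the configuration (h; x₁, x₂; V₁, V₂) if and only if e^{−2 i ℓ z / h} = R₁ R₂. -/
/-- `z` is a resonance of the configuration `(h; x₁,…,x_N; V₁,…,V_N)`:
there exist amplitudes `v_j⁺ = vp (j)`, `v_j⁻ = vm (j)` for `j = 0,…,N`, not all zero,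
with `v₀⁺ = 0`, `v_N⁻ = 0`, satisfying the continuity and jump conditions at each pole. -/
def IsResonance (N : ℕ) (h : ℝ) (x V : Fin N → ℝ) (z : ℂ) : Prop :=
  ∃ vp vm : Fin (N + 1) → ℂ, (vp ≠ 0 ∨ vm ≠ 0) ∧ vp 0 = 0 ∧ vm (Fin.last N) = 0 ∧
    ∀ j : Fin N,
      (-vm j.castSucc * Complex.exp (-(Complex.I * (x j) * z) / h)
        - vp j.castSucc * Complex.exp (Complex.I * (x j) * z / h)
        + vm j.succ * Complex.exp (-(Complex.I * (x j) * z) / h)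
        + vp j.succ * Complex.exp (Complex.I * (x j) * z / h) = 0)
      ∧ ((h * z / Complex.I) *
           (vm j.castSucc * Complex.exp (-(Complex.I * (x j) * z) / h)
            - vp j.castSucc * Complex.exp (Complex.I * (x j) * z / h)
            - vm j.succ * Complex.exp (-(Complex.I * (x j) * z) / h)
            + vp j.succ * Complex.exp (Complex.I * (x j) * z / h))
         + (V j) * (vm j.succ * Complex.exp (-(Complex.I * (x j) * z) / h)
            + vp j.succ * Complex.exp (Complex.I * (x j) * z / h)) = 0)

/-- `Ṽ_j = V_j / (2 i z h)`. -/
noncomputable def Vt (V h : ℝ) (z : ℂ) : ℂ := (V : ℂ) / (2 * Complex.I * z * (h : ℂ))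

/-- Reflection coefficient `R_j = Ṽ_j / (1 - Ṽ_j)`. -/
noncomputable def Rc (V h : ℝ) (z : ℂ) : ℂ := Vt V h z / (1 - Vt V h z)

/-- For two delta poles, `z ≠ 0` (with `Ṽ₁ ≠ 1`, `Ṽ₂ ≠ 1`) is a resonance iff
`e^{-2iℓz/h} = R₁ R₂`, where `ℓ = x₂ - x₁`. -/
theorem two_delta_resonance_iff
    (h x₁ x₂ V₁ V₂ : ℝ) (hh : 0 < h) (hx : x₁ < x₂)
    (hV₁ : V₁ ≠ 0) (hV₂ : V₂ ≠ 0) (z : ℂ) (hz : z ≠ 0)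
    (hVt1 : Vt V₁ h z ≠ 1) (hVt2 : Vt V₂ h z ≠ 1) :
    IsResonance 2 h ![x₁, x₂] ![V₁, V₂] z ↔
      Complex.exp (-(2 * Complex.I * ((x₂ - x₁ : ℝ) : ℂ) * z) / h) =
        Rc V₁ h z * Rc V₂ h z := by
  have hh0 : (h:ℂ) ≠ 0 := Complex.ofReal_ne_zero.mpr hh.ne'
  have hD : (2*Complex.I*z*(h:ℂ)) ≠ 0 := by
    simp [Complex.I_ne_zero, hz, hh0]
  have ht1 : (1 - Vt V₁ h z) ≠ 0 := sub_ne_zero.mpr (Ne.symm hVt1)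
  have ht2 : (1 - Vt V₂ h z) ≠ 0 := sub_ne_zero.mpr (Ne.symm hVt2)
  have ht1u : Vt V₁ h z * (2*Complex.I*z*(h:ℂ)) = V₁ := by rw [Vt]; field_simp
  have ht2u : Vt V₂ h z * (2*Complex.I*z*(h:ℂ)) = V₂ := by rw [Vt]; field_simp
  have hdiv : (h:ℂ)*z/Complex.I = -(Complex.I*(h:ℂ)*z) := by
    rw [div_eq_mul_inv, Complex.inv_I]; ring
  set e1p := Complex.exp (Complex.I * (x₁:ℂ) * z / h) with he1p
  set e1m := Complex.exp (-(Complex.I * (x₁:ℂ) * z) / h) with he1m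
  set e2p := Complex.exp (Complex.I * (x₂:ℂ) * z / h) with he2p
  set e2m := Complex.exp (-(Complex.I * (x₂:ℂ) * z) / h) with he2m
  have hne1p : e1p ≠ 0 := Complex.exp_ne_zero _
  have hne1m : e1m ≠ 0 := Complex.exp_ne_zero _
  have hne2p : e2p ≠ 0 := Complex.exp_ne_zero _
  have hne2m : e2m ≠ 0 := Complex.exp_ne_zero _
  have hE : Complex.exp (-(2 * Complex.I * ((x₂ - x₁ : ℝ) : ℂ) * z) / h) * (e1m * e2p)
      = e2m * e1p := by
    rw [he1m, he2p, he2m, he1p, ← Complex.exp_add, ← Complex.exp_add, ← Complex.exp_add]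
    congr 1
    push_cast
    field_simp
    ring
  constructor
  · rintro ⟨vp, vm, hnz, hvp0, hvmN, hcond⟩
    obtain ⟨hc1, hj1⟩ := hcond 0
    obtain ⟨hc2, hj2⟩ := hcond 1
    have hvm2 : vm 2 = 0 := hvmN
    simp only [Matrix.cons_val_zero, Matrix.cons_val_one, Matrix.head_cons,
      Fin.castSucc_zero, Fin.succ_zero_eq_one, Fin.castSucc_one, Fin.succ_one_eq_two]
      at hc1 hj1 hc2 hj2
    rw [hdiv] at hj1 hj2
    rw [hvp0] at hc1 hj1
    rw [hvm2] at hc2 hj2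
    rw [← he1p, ← he1m] at hc1 hj1
    rw [← he2p, ← he2m] at hc2 hj2
    have hC : vm 1 * (2*Complex.I*z*(h:ℂ)) = (2*Complex.I*z*(h:ℂ) - V₁) * vm 0 := by
      apply mul_right_cancel₀ hne1m
      linear_combination hj1 + (Complex.I*(h:ℂ)*z - (V₁:ℂ)) * hc1
    have hB : vp 1 * e1p * (2*Complex.I*z*(h:ℂ)) = (V₁:ℂ) * (vm 0 * e1m) := by
      linear_combination (Complex.I*(h:ℂ)*z + (V₁:ℂ)) * hc1 - hj1
    have hC2 : vm 1 * e2m * (2*Complex.I*z*(h:ℂ)) = (V₂:ℂ) * (vp 2 * e2p) := by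
      linear_combination (-(Complex.I*(h:ℂ)*z)) * hc2 - hj2
    have hB2 : vp 1 * e2p * (2*Complex.I*z*(h:ℂ))
        = (2*Complex.I*z*(h:ℂ) - (V₂:ℂ)) * (vp 2 * e2p) := by
      linear_combination (-(Complex.I*(h:ℂ)*z)) * hc2 + hj2
    by_cases ha : vm 0 = 0
    · exfalso
      have hc : vm 1 = 0 := by
        have h' := hC; rw [ha] at h'
        simpa [hD] using h'
      have hb : vp 1 = 0 := by
        have h' := hB; rw [ha] at h'
        simp only [zero_mul, mul_zero] at h'
        rcases mul_eq_zero.mp h' with h'' | h''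
        · rcases mul_eq_zero.mp h'' with h3 | h3
          · exact h3
          · exact absurd h3 hne1p
        · exact absurd h'' hD
      have hd : vp 2 = 0 := by
        have h' := hB2; rw [hb] at h'
        simp only [zero_mul] at h'
        have hu : (2*Complex.I*z*(h:ℂ) - (V₂:ℂ)) ≠ 0 := by
          intro hq
          apply hVt2
          rw [Vt]
          rw [sub_eq_zero] at hq
          field_simp [← hq]
          exact hq.symm
        rcases mul_eq_zero.mp h'.symm with h'' | h''
        · exact absurd h'' hu
        · rcases mul_eq_zero.mp h'' with h3 | h3
          · exact h3
          · exact absurd h3 hne2p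
      rcases hnz with H | H
      · exact H (funext fun i => by fin_cases i <;> simpa using (by assumption : _))
      · exact H (funext fun i => by fin_cases i <;> simpa using (by assumption : _))
    · have key : (2*Complex.I*z*(h:ℂ) - V₁) * (2*Complex.I*z*(h:ℂ) - V₂) * (e2m * e1p)
          = (V₁:ℂ) * V₂ * (e1m * e2p) := by
        apply mul_left_cancel₀ ha
        apply mul_left_cancel₀ hD
        linear_combination
          (-(2*Complex.I*z*(h:ℂ) - (V₂:ℂ)) * (2*Complex.I*z*(h:ℂ)) * e2m * e1p) * hC
          + ((2*Complex.I*z*(h:ℂ) - (V₂:ℂ)) * (2*Complex.I*z*(h:ℂ)) * e1p) * hC2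
          + (-(V₂:ℂ) * (2*Complex.I*z*(h:ℂ)) * e1p) * hB2
          + ((V₂:ℂ) * (2*Complex.I*z*(h:ℂ)) * e2p) * hB
      have key2 : (1 - Vt V₁ h z) * (1 - Vt V₂ h z) * (e2m * e1p)
          = Vt V₁ h z * Vt V₂ h z * (e1m * e2p) := by
        apply mul_left_cancel₀ hD
        apply mul_left_cancel₀ hD
        linear_combination key
          + (-(((2*Complex.I*z*(h:ℂ)) - Vt V₂ h z * (2*Complex.I*z*(h:ℂ))) * e2m * e1p
              + Vt V₂ h z * (2*Complex.I*z*(h:ℂ)) * e1m * e2p)) * ht1u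
          + (-(((2*Complex.I*z*(h:ℂ)) - (V₁:ℂ)) * e2m * e1p + (V₁:ℂ) * e1m * e2p)) * ht2u
      rw [Rc, Rc, div_mul_div_comm, eq_div_iff (mul_ne_zero ht1 ht2)]
      apply mul_right_cancel₀ (mul_ne_zero hne1m hne2p)
      linear_combination ((1 - Vt V₁ h z) * (1 - Vt V₂ h z)) * hE + key2
  · intro hyp
    rw [Rc, Rc, div_mul_div_comm, eq_div_iff (mul_ne_zero ht1 ht2)] at hyp
    have hK : (1 - Vt V₁ h z) * (1 - Vt V₂ h z) * (e2m * e1p)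
        = Vt V₁ h z * Vt V₂ h z * (e1m * e2p) := by
      linear_combination (e1m * e2p) * hyp - ((1 - Vt V₁ h z) * (1 - Vt V₂ h z)) * hE
    refine ⟨![0, (1 - Vt V₂ h z) * Vt V₁ h z * e1m, Vt V₁ h z * e1m],
      ![(1 - Vt V₂ h z) * e1p, (1 - Vt V₁ h z) * (1 - Vt V₂ h z) * e1p, 0],
      Or.inr ?_, rfl, rfl, ?_⟩
    · intro H
      have := congrFun H 0
      simp only [Matrix.cons_val_zero, Pi.zero_apply] at this
      exact (mul_ne_zero ht2 hne1p) this
    · intro j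
      fin_cases j <;>
        simp only [Fin.mk_zero, Fin.mk_one, Matrix.cons_val_zero, Matrix.cons_val_one,
          Matrix.head_cons, Fin.castSucc_zero, Fin.succ_zero_eq_one, Fin.castSucc_one,
          Fin.succ_one_eq_two, Matrix.cons_val_two, Matrix.tail_cons, ← he1p, ← he1m, ← he2p, ← he2m] <;>
        rw [hdiv] <;> constructor
      · linear_combination
      · linear_combination (-(1 - Vt V₂ h z) * e1p * e1m) * ht1u
      · linear_combination -hK
      · linear_combination (-(Complex.I*(h:ℂ)*z)) * hK - (Vt V₁ h z * e1m * e2p) * ht2u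
end

section
/- Let N = 2, x₁ < x₂ real, ℓ = x₂ − x₁, C₁, C₂ ∈ ℝ \ {0}, and β₁, β₂ > 0, and for h > 0 set V_j = C_j h^{1+β_j}. Then there exist constants C > 0 and h₀ > 0 such that for every h ∈ (0, h₀) and every resonance z of the configuration (h; x₁, x₂; V₁, V₂) satisfying 1/2 ≤ |z| ≤ 2 and Re z > 0, there is a positive integer k with | z − ( π h k / ℓ − i ((β₁+β₂)/(2ℓ)) h log(1/h) ) | ≤ C h. -/
open Complex in
lemma resonance_scalar_eq (h x₁ x₂ V₁ V₂ : ℝ) (z : ℂ)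
    (hh : (h : ℂ) ≠ 0) (hz : z ≠ 0) (hV₁ : (V₁ : ℂ) ≠ 0)
    (hP : 2 * (h : ℂ) * z + Complex.I * V₁ ≠ 0)
    (hQ : 2 * (h : ℂ) * z + Complex.I * V₂ ≠ 0)
    (hres : IsResonance 2 h ![x₁, x₂] ![V₁, V₂] z) :
    (2 * (h : ℂ) * z + Complex.I * V₁) * (2 * (h : ℂ) * z + Complex.I * V₂)
      + (V₁ : ℂ) * V₂ * Complex.exp (2 * Complex.I * ((x₂ : ℂ) - x₁) * z / h) = 0 := by
  obtain ⟨vp, vm, hnt, hvp0, hvmN, heq⟩ := hres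
  have h0c := (heq 0).1
  have h0j := (heq 0).2
  have h1c := (heq 1).1
  have h1j := (heq 1).2
  have hvm2 : vm 2 = 0 := by simpa using hvmN
  simp only [Matrix.cons_val_zero, Matrix.cons_val_one, Matrix.head_cons,
    Fin.castSucc_zero, Fin.succ_zero_eq_one, Fin.castSucc_one, Fin.succ_one_eq_two,
    hvp0, hvm2, Complex.div_I] at h0c h0j h1c h1j
  set E1 := Complex.exp (Complex.I * (x₁ : ℂ) * z / h) with hE1def
  set F1 := Complex.exp (-(Complex.I * (x₁ : ℂ) * z) / h) with hF1def
  set E2 := Complex.exp (Complex.I * (x₂ : ℂ) * z / h) with hE2def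
  set F2 := Complex.exp (-(Complex.I * (x₂ : ℂ) * z) / h) with hF2def
  set b0 := vm 0 with hb0def
  set a1 := vp 1 with ha1def
  set b1 := vm 1 with hb1def
  set a2 := vp 2 with ha2def
  have hEF1 : E1 * F1 = 1 := by
    rw [hE1def, hF1def, ← Complex.exp_add,
      show Complex.I * (x₁ : ℂ) * z / h + -(Complex.I * (x₁ : ℂ) * z) / h = 0 by ring,
      Complex.exp_zero]
  have hEF2 : E2 * F2 = 1 := by
    rw [hE2def, hF2def, ← Complex.exp_add,
      show Complex.I * (x₂ : ℂ) * z / h + -(Complex.I * (x₂ : ℂ) * z) / h = 0 by ring,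
      Complex.exp_zero]
  have hII : Complex.I * Complex.I = -1 := Complex.I_mul_I
  have hE1 : E1 ≠ 0 := Complex.exp_ne_zero _
  have hF1 : F1 ≠ 0 := Complex.exp_ne_zero _
  have hE2 : E2 ≠ 0 := Complex.exp_ne_zero _
  have hF2 : F2 ≠ 0 := Complex.exp_ne_zero _
  have hHz : 2 * (h : ℂ) * z ≠ 0 := by
    simp [hh, hz]
  have key1 : (2 * (h : ℂ) * z + Complex.I * V₁) * b0 = 2 * (h : ℂ) * z * b1 := by
    linear_combination Complex.I * E1 * h0j
      + (Complex.I * E1 * (Complex.I * (h * z)) - Complex.I * E1 * V₁) * h0c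
      + (-(-2 * Complex.I * Complex.I * (h * z) * b0 + 2 * Complex.I * Complex.I * (h * z) * b1
          + Complex.I * V₁ * b0)) * hEF1
      + (2 * (h * z) * (b0 - b1)) * hII
  have key2 : 2 * (h : ℂ) * z * a1 * E1 = -Complex.I * V₁ * b0 * F1 := by
    linear_combination (2 * (h : ℂ) * z) * h0c + F1 * key1
  have key3 : (2 * (h : ℂ) * z + Complex.I * V₂) * a2 = 2 * (h : ℂ) * z * a1 := by
    linear_combination Complex.I * F2 * h1j
      + (-(Complex.I * (Complex.I * (h * z)) * F2)) * h1c
      + (-(Complex.I * (-2 * Complex.I * (h * z) * (a2 - a1) + V₂ * a2))) * hEF2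
      + (2 * (h * z) * (a2 - a1)) * hII
  have key4 : 2 * (h : ℂ) * z * b1 * F2 = -Complex.I * V₂ * a2 * E2 := by
    linear_combination (-2 * (h : ℂ) * z) * h1c + E2 * key3
  -- nonvanishing of b0
  have hb0 : b0 ≠ 0 := by
    intro hb0z
    have hb1z : b1 = 0 := by
      have : 2 * (h : ℂ) * z * b1 = 0 := by rw [← key1, hb0z]; ring
      exact (mul_eq_zero.mp this).resolve_left hHz
    have ha1z : a1 = 0 := by
      have : 2 * (h : ℂ) * z * a1 * E1 = 0 := by rw [key2, hb0z]; ring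
      rcases mul_eq_zero.mp this with hh' | hh'
      · exact (mul_eq_zero.mp hh').resolve_left hHz
      · exact absurd hh' hE1
    have ha2z : a2 = 0 := by
      have : (2 * (h : ℂ) * z + Complex.I * V₂) * a2 = 0 := by rw [key3, ha1z]; ring
      exact (mul_eq_zero.mp this).resolve_left hQ
    apply hnt.elim
    · intro hvp
      apply hvp
      funext i
      fin_cases i
      · exact hvp0
      · exact ha1z
      · exact ha2z
    · intro hvm
      apply hvm
      funext i
      fin_cases i
      · exact hb0z
      · exact hb1z
      · exact hvm2
  have ha1 : a1 ≠ 0 := by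
    intro ha1z
    have : -Complex.I * V₁ * b0 * F1 = 0 := by rw [← key2, ha1z]; ring
    have := mul_ne_zero (mul_ne_zero (mul_ne_zero (neg_ne_zero.mpr Complex.I_ne_zero) hV₁) hb0) hF1
    contradiction
  have ha2 : a2 ≠ 0 := by
    intro ha2z
    have h1 : 2 * (h : ℂ) * z * a1 = 0 := by rw [← key3, ha2z]; ring
    exact ha1 ((mul_eq_zero.mp h1).resolve_left hHz)
  have prod1 : ((2 * (h : ℂ) * z + Complex.I * V₁) * b0) * ((2 * (h : ℂ) * z + Complex.I * V₂) * a2)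
      = (2 * (h : ℂ) * z * b1) * (2 * (h : ℂ) * z * a1) := by rw [key1, key3]
  have prod2 : (2 * (h : ℂ) * z * a1 * E1) * (2 * (h : ℂ) * z * b1 * F2)
      = (-Complex.I * V₁ * b0 * F1) * (-Complex.I * V₂ * a2 * E2) := by rw [key2, key4]
  have goal0 : (2 * (h : ℂ) * z + Complex.I * V₁) * (2 * (h : ℂ) * z + Complex.I * V₂)
      * (E1 * F2) * (b0 * a2)
      = (Complex.I * Complex.I) * V₁ * V₂ * (F1 * E2) * (b0 * a2) := by
    linear_combination (E1 * F2) * prod1 + prod2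
  have goal1 : (2 * (h : ℂ) * z + Complex.I * V₁) * (2 * (h : ℂ) * z + Complex.I * V₂)
      * (E1 * F2) = (Complex.I * Complex.I) * V₁ * V₂ * (F1 * E2) :=
    mul_right_cancel₀ (mul_ne_zero hb0 ha2) goal0
  have hEX : Complex.exp (2 * Complex.I * ((x₂ : ℂ) - x₁) * z / h) = E2 ^ 2 * F1 ^ 2 := by
    rw [hE2def, hF1def, show (2 : ℂ) * Complex.I * ((x₂ : ℂ) - x₁) * z / h
        = (Complex.I * (x₂ : ℂ) * z / h + Complex.I * (x₂ : ℂ) * z / h)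
          + (-(Complex.I * (x₁ : ℂ) * z) / h + -(Complex.I * (x₁ : ℂ) * z) / h) by ring,
      Complex.exp_add, Complex.exp_add, Complex.exp_add]
    ring
  linear_combination (E2 * F1) * goal1 + (V₁ : ℂ) * V₂ * hEX
    + ((V₁ : ℂ) * V₂ * F1 ^ 2 * E2 ^ 2) * hII
    - (2 * (h : ℂ) * z + Complex.I * V₁) * (2 * (h : ℂ) * z + Complex.I * V₂) * E1 * F1 * hEF2
    - (2 * (h : ℂ) * z + Complex.I * V₁) * (2 * (h : ℂ) * z + Complex.I * V₂) * hEF1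


lemma quarter_le_re {z : ℂ} (h1 : 1/2 ≤ ‖z‖) (h2 : |z.im| ≤ 1/4)
    (h3 : 0 < z.re) : 1/4 ≤ z.re := by
  have e1 := Complex.sq_norm z
  rw [Complex.normSq_apply, pow_two] at e1
  have e2 : (1/2:ℝ)*(1/2) ≤ ‖z‖ * ‖z‖ :=
    mul_le_mul h1 h1 (by norm_num) (norm_nonneg z)
  have him2 : z.im * z.im ≤ 1/16 := by
    nlinarith [le_abs_self z.im, neg_abs_le z.im, h2]
  have hresq : 3/16 ≤ z.re * z.re := by linarith
  by_contra hcon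
  push_neg at hcon
  have : z.re * z.re < (1/4)*(1/4) := by nlinarith [h3]
  linarith

set_option maxHeartbeats 1000000 in
/-- Theorem (two deltas, leading asymptotics): every resonance `z` with `1/2 ≤ |z| ≤ 2`
and `Re z > 0` satisfies `z = πhk/ℓ - i((β₁+β₂)/(2ℓ)) h log(1/h) + O(h)` for some
positive integer `k`. -/
theorem two_delta_resonance_asymptotics
    (x₁ x₂ C₁ C₂ β₁ β₂ : ℝ) (hx : x₁ < x₂) (hC₁ : C₁ ≠ 0) (hC₂ : C₂ ≠ 0)
    (hβ₁ : 0 < β₁) (hβ₂ : 0 < β₂) :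
    ∃ C > (0 : ℝ), ∃ h₀ > (0 : ℝ), ∀ h : ℝ, 0 < h → h < h₀ →
      ∀ z : ℂ,
        IsResonance 2 h ![x₁, x₂] ![C₁ * h ^ (1 + β₁), C₂ * h ^ (1 + β₂)] z →
        1 / 2 ≤ ‖z‖ → ‖z‖ ≤ 2 → 0 < z.re →
        ∃ k : ℕ, 0 < k ∧
          ‖(z - (((Real.pi * h * k / (x₂ - x₁) : ℝ) : ℂ)
            - Complex.I * (((β₁ + β₂) / (2 * (x₂ - x₁)) : ℝ) : ℂ)
              * (h : ℂ) * ((Real.log (1 / h) : ℝ) : ℂ)))‖ ≤ C * h := by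
  have hℓ : 0 < x₂ - x₁ := by linarith
  set ℓ : ℝ := x₂ - x₁ with hℓdef
  set c : ℝ := |C₁| * |C₂| with hcdef
  have hc : 0 < c := mul_pos (abs_pos.mpr hC₁) (abs_pos.mpr hC₂)
  set β : ℝ := β₁ + β₂ with hβdef
  have hβ : 0 < β := by positivity
  set M : ℝ := |Real.log 4 + Real.log c| + |Real.log 25 - Real.log c| with hMdef
  have hM : 0 ≤ M := by positivity
  set C : ℝ := (Real.pi + M) / (2 * ℓ) + 1 with hCdef
  have hC : 0 < C := by positivity
  have hev : ∀ᶠ h in nhdsWithin (0:ℝ) (Set.Ioi 0),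
      (0 < h ∧ h < 1) ∧ (|C₁| * h ^ β₁ ≤ 1/2 ∧ |C₂| * h ^ β₂ ≤ 1/2) ∧
      ((β/(2*ℓ)) * (h * Real.log (1/h)) + (M/(2*ℓ)) * h ≤ 1/4 ∧ h ≤ ℓ/(4*Real.pi)) := by
    have hmem : ∀ᶠ h in nhdsWithin (0:ℝ) (Set.Ioi 0), 0 < h :=
      eventually_mem_nhdsWithin
    have h1 : ∀ᶠ h in nhdsWithin (0:ℝ) (Set.Ioi 0), h < 1 :=
      eventually_nhdsWithin_of_eventually_nhds (eventually_lt_nhds one_pos)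
    have hrp : ∀ (b : ℝ), 0 < b → ∀ (c' : ℝ),
        Filter.Tendsto (fun h : ℝ => c' * h ^ b) (nhdsWithin (0:ℝ) (Set.Ioi 0)) (nhds 0) := by
      intro b hb c'
      have h2 : Filter.Tendsto (fun h : ℝ => h ^ b) (nhds (0:ℝ)) (nhds ((0:ℝ) ^ b)) :=
        (Real.continuousAt_rpow_const 0 b (Or.inr hb.le))
      rw [Real.zero_rpow hb.ne'] at h2
      have h3 : Filter.Tendsto (fun h : ℝ => c' * h ^ b)
          (nhdsWithin (0:ℝ) (Set.Ioi 0)) (nhds (c' * 0)) :=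
        (h2.const_mul c').mono_left nhdsWithin_le_nhds
      simpa using h3
    have h2 : ∀ᶠ h in nhdsWithin (0:ℝ) (Set.Ioi 0), |C₁| * h ^ β₁ ≤ 1/2 :=
      ((hrp β₁ hβ₁ |C₁|).eventually (eventually_le_nhds (by norm_num)))
    have h3 : ∀ᶠ h in nhdsWithin (0:ℝ) (Set.Ioi 0), |C₂| * h ^ β₂ ≤ 1/2 :=
      ((hrp β₂ hβ₂ |C₂|).eventually (eventually_le_nhds (by norm_num)))
    have hxlog : Filter.Tendsto (fun h : ℝ => h * Real.log (1/h))
        (nhdsWithin (0:ℝ) (Set.Ioi 0)) (nhds 0) := by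
      have t1 : Filter.Tendsto (fun x : ℝ => Real.log x * x)
          (nhdsWithin (0:ℝ) (Set.Ioi 0)) (nhds 0) := by
        simpa using tendsto_log_mul_rpow_nhdsGT_zero one_pos
      have t2 := t1.neg
      rw [neg_zero] at t2
      refine t2.congr (fun x => ?_)
      rw [one_div, Real.log_inv]; ring
    have h4 : ∀ᶠ h in nhdsWithin (0:ℝ) (Set.Ioi 0),
        (β/(2*ℓ)) * (h * Real.log (1/h)) + (M/(2*ℓ)) * h ≤ 1/4 := by
      have tid : Filter.Tendsto (fun h : ℝ => (M/(2*ℓ)) * h)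
          (nhdsWithin (0:ℝ) (Set.Ioi 0)) (nhds 0) := by
        have h5 : Filter.Tendsto (fun x : ℝ => (M/(2*ℓ)) * x) (nhds 0) (nhds ((M/(2*ℓ)) * 0)) :=
          Filter.Tendsto.const_mul _ Filter.tendsto_id
        rw [mul_zero] at h5
        exact h5.mono_left nhdsWithin_le_nhds
      have h6 := (hxlog.const_mul (β/(2*ℓ))).add tid
      rw [mul_zero, add_zero] at h6
      exact h6.eventually (eventually_le_nhds (by norm_num))
    have h5 : ∀ᶠ h in nhdsWithin (0:ℝ) (Set.Ioi 0), h ≤ ℓ/(4*Real.pi) :=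
      eventually_nhdsWithin_of_eventually_nhds
        (eventually_le_nhds (by positivity))
    filter_upwards [hmem, h1, h2, h3, h4, h5] with h a1 a2 a3 a4 a5 a6
    exact ⟨⟨a1, a2⟩, ⟨a3, a4⟩, ⟨a5, a6⟩⟩
  obtain ⟨h₀, hh₀, hsub⟩ := mem_nhdsGT_iff_exists_Ioo_subset.mp hev
  refine ⟨C, hC, h₀, hh₀, ?_⟩
  intro h hp hlt z hres habs1 habs2 hre
  obtain ⟨⟨-, hlt1⟩, ⟨hsm1, hsm2⟩, ⟨hq4, hq5⟩⟩ := hsub ⟨hp, hlt⟩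
  set V₁ : ℝ := C₁ * h ^ (1 + β₁) with hV₁def
  set V₂ : ℝ := C₂ * h ^ (1 + β₂) with hV₂def
  have hrp1 : (0:ℝ) < h ^ (1 + β₁) := Real.rpow_pos_of_pos hp _
  have hrp2 : (0:ℝ) < h ^ (1 + β₂) := Real.rpow_pos_of_pos hp _
  have habsV₁ : |V₁| = |C₁| * h ^ (1 + β₁) := by
    rw [hV₁def, abs_mul, abs_of_pos hrp1]
  have habsV₂ : |V₂| = |C₂| * h ^ (1 + β₂) := by
    rw [hV₂def, abs_mul, abs_of_pos hrp2]
  have hsplit1 : h ^ (1 + β₁) = h * h ^ β₁ := by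
    rw [Real.rpow_add hp, Real.rpow_one]
  have hsplit2 : h ^ (1 + β₂) = h * h ^ β₂ := by
    rw [Real.rpow_add hp, Real.rpow_one]
  have hV₁le : |V₁| ≤ h / 2 := by
    rw [habsV₁, hsplit1]
    calc |C₁| * (h * h ^ β₁) = (|C₁| * h ^ β₁) * h := by ring
    _ ≤ (1/2) * h := mul_le_mul_of_nonneg_right hsm1 hp.le
    _ = h / 2 := by ring
  have hV₂le : |V₂| ≤ h / 2 := by
    rw [habsV₂, hsplit2]
    calc |C₂| * (h * h ^ β₂) = (|C₂| * h ^ β₂) * h := by ring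
    _ ≤ (1/2) * h := mul_le_mul_of_nonneg_right hsm2 hp.le
    _ = h / 2 := by ring
  have hz0 : z ≠ 0 := by
    intro hz
    rw [hz] at habs1; simp at habs1; linarith
  have hh0 : (h : ℂ) ≠ 0 := by exact_mod_cast hp.ne'
  have habs2hz : ‖2 * (h:ℂ) * z‖ = 2 * h * ‖z‖ := by
    rw [norm_mul, norm_mul]
    simp [Complex.norm_real, abs_of_pos hp]
  have hPbnd : ∀ V : ℝ, |V| ≤ h/2 →
      h/2 ≤ ‖2 * (h:ℂ) * z + Complex.I * V‖ ∧
      ‖2 * (h:ℂ) * z + Complex.I * V‖ ≤ 5 * h := by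
    intro V hV
    have habsIV : ‖Complex.I * (V:ℂ)‖ = |V| := by
      rw [norm_mul]; simp [Complex.norm_real]
    constructor
    · have h1 : ‖2 * (h:ℂ) * z‖
          ≤ ‖2 * (h:ℂ) * z + Complex.I * V‖ + ‖Complex.I * (V:ℂ)‖ := by
        have h2 := norm_add_le (2 * (h:ℂ) * z + Complex.I * V) (-(Complex.I * V))
        simpa using h2
      rw [habs2hz, habsIV] at h1
      have h3 : 2 * h * (1/2) ≤ 2 * h * ‖z‖ :=
        mul_le_mul_of_nonneg_left habs1 (by linarith)
      linarith
    · have h1 := norm_add_le (2 * (h:ℂ) * z) (Complex.I * V)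
      rw [habs2hz, habsIV] at h1
      have h3 : 2 * h * ‖z‖ ≤ 2 * h * 2 :=
        mul_le_mul_of_nonneg_left habs2 (by linarith)
      linarith
  obtain ⟨hP1, hP2⟩ := hPbnd V₁ hV₁le
  obtain ⟨hQ1, hQ2⟩ := hPbnd V₂ hV₂le
  have hPne : 2 * (h:ℂ) * z + Complex.I * V₁ ≠ 0 := by
    intro h0; rw [h0] at hP1; simp at hP1; linarith
  have hQne : 2 * (h:ℂ) * z + Complex.I * V₂ ≠ 0 := by
    intro h0; rw [h0] at hQ1; simp at hQ1; linarith
  have hV₁ne : (V₁ : ℂ) ≠ 0 := by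
    rw [hV₁def]; exact_mod_cast mul_ne_zero hC₁ hrp1.ne'
  have hEq := resonance_scalar_eq h x₁ x₂ V₁ V₂ z hh0 hz0 hV₁ne hPne hQne hres
  set u : ℝ := (2 * ℓ / h) * (-z.im) with hudef
  have hEXre : (2 * Complex.I * ((x₂:ℂ) - x₁) * z / h).re = u := by
    have harg : (2 * Complex.I * ((x₂:ℂ) - (x₁:ℂ)) * z / (h:ℂ))
        = ((2 * ℓ / h : ℝ) : ℂ) * (Complex.I * z) := by
      rw [hℓdef]; push_cast; ring
    rw [harg, Complex.re_ofReal_mul, hudef]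
    simp [Complex.mul_re]
  set W : ℝ := |V₁| * |V₂| with hWdef
  have hWpos : 0 < W := by
    rw [hWdef, habsV₁, habsV₂]; positivity
  have habseq : W * Real.exp u
      = ‖2 * (h:ℂ) * z + Complex.I * V₁‖
        * ‖2 * (h:ℂ) * z + Complex.I * V₂‖ := by
    have h1 : (V₁:ℂ) * V₂ * Complex.exp (2 * Complex.I * ((x₂:ℂ) - x₁) * z / h)
        = -((2 * (h:ℂ) * z + Complex.I * V₁) * (2 * (h:ℂ) * z + Complex.I * V₂)) := by
      linear_combination hEq
    have h2 := congrArg (fun w : ℂ => ‖w‖) h1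
    rw [norm_neg, norm_mul, norm_mul, norm_mul, Complex.norm_exp, hEXre,
      Complex.norm_real, Complex.norm_real, Real.norm_eq_abs, Real.norm_eq_abs] at h2
    rw [hWdef]; linarith [h2]
  have hprodlow : h^2/4 ≤ W * Real.exp u := by
    rw [habseq]
    calc h^2/4 = (h/2) * (h/2) := by ring
    _ ≤ _ := mul_le_mul hP1 hQ1 (by linarith) (norm_nonneg _)
  have hprodup : W * Real.exp u ≤ 25 * h^2 := by
    rw [habseq]
    calc ‖_‖ * ‖_‖ ≤ (5*h) * (5*h) :=
          mul_le_mul hP2 hQ2 (norm_nonneg _) (by linarith)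
    _ = 25 * h^2 := by ring
  set L : ℝ := Real.log (1/h) with hLdef
  have hL : L = -Real.log h := by rw [hLdef, one_div, Real.log_inv]
  have hLnn : 0 ≤ L := by
    rw [hLdef]
    apply Real.log_nonneg
    rw [le_div_iff₀ hp]; linarith
  have hlogW : Real.log W = Real.log c + (2 + β) * Real.log h := by
    rw [hWdef, habsV₁, habsV₂, Real.log_mul (by positivity) (by positivity),
      Real.log_mul (abs_ne_zero.mpr hC₁) hrp1.ne', Real.log_mul (abs_ne_zero.mpr hC₂) hrp2.ne',
      Real.log_rpow hp, Real.log_rpow hp, hcdef,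
      Real.log_mul (abs_ne_zero.mpr hC₁) (abs_ne_zero.mpr hC₂), hβdef]
    ring
  have hul : β * L - (Real.log 4 + Real.log c) ≤ u := by
    have h1 := Real.log_le_log (by positivity : (0:ℝ) < h^2/4) hprodlow
    rw [Real.log_mul hWpos.ne' (Real.exp_ne_zero u), Real.log_exp,
      Real.log_div (pow_ne_zero 2 hp.ne') (by norm_num : (4:ℝ) ≠ 0), Real.log_pow] at h1
    push_cast at h1
    rw [hlogW] at h1
    rw [hL]
    linarith
  have huu : u ≤ β * L + (Real.log 25 - Real.log c) := by
    have h1 := Real.log_le_log (mul_pos hWpos (Real.exp_pos u)) hprodup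
    rw [Real.log_mul hWpos.ne' (Real.exp_ne_zero u), Real.log_exp,
      Real.log_mul (by norm_num : (25:ℝ) ≠ 0) (pow_ne_zero 2 hp.ne'), Real.log_pow] at h1
    push_cast at h1
    rw [hlogW] at h1
    rw [hL]
    linarith
  have hzim : z.im = -(u*h)/(2*ℓ) := by
    rw [hudef]; field_simp
  have hdiff : z.im + (β/(2*ℓ))*h*L = (h/(2*ℓ)) * (β*L - u) := by
    rw [hzim]; field_simp; ring
  have habsBLu : |β*L - u| ≤ M := by
    rw [abs_le]; constructor
    · have w1 := le_abs_self (Real.log 25 - Real.log c)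
      have w2 := abs_nonneg (Real.log 4 + Real.log c)
      rw [hMdef]; linarith
    · have w1 := le_abs_self (Real.log 4 + Real.log c)
      have w2 := abs_nonneg (Real.log 25 - Real.log c)
      rw [hMdef]; linarith
  have him : |z.im + (β/(2*ℓ))*h*L| ≤ (M/(2*ℓ))*h := by
    rw [hdiff, abs_mul, abs_of_pos (by positivity : (0:ℝ) < h/(2*ℓ))]
    calc h/(2*ℓ) * |β*L - u| ≤ h/(2*ℓ) * M :=
          mul_le_mul_of_nonneg_left habsBLu (by positivity)
    _ = (M/(2*ℓ))*h := by ring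
  have hXnn : 0 ≤ (β/(2*ℓ))*h*L := by positivity
  have himq : |z.im| ≤ 1/4 := by
    have t1 := abs_add_le (z.im + (β/(2*ℓ))*h*L) (-((β/(2*ℓ))*h*L))
    rw [abs_neg, abs_of_nonneg hXnn] at t1
    simp only [add_neg_cancel_right] at t1
    have hq4' : (β/(2*ℓ))*h*L + (M/(2*ℓ))*h ≤ 1/4 := by
      have e : (β/(2*ℓ))*(h*L) = (β/(2*ℓ))*h*L := (mul_assoc _ _ _).symm
      linarith [hq4, e]
    linarith
  have hre4 : 1/4 ≤ z.re := quarter_le_re habs1 himq hre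
  have hπh : 0 < Real.pi * h := by positivity
  set t : ℝ := ℓ * z.re / (Real.pi * h) with htdef
  have ht1 : 1 ≤ t := by
    rw [htdef, le_div_iff₀ hπh, one_mul]
    have e1 : Real.pi * h ≤ Real.pi * (ℓ/(4*Real.pi)) :=
      mul_le_mul_of_nonneg_left hq5 Real.pi_pos.le
    have e2 : Real.pi * (ℓ/(4*Real.pi)) = ℓ/4 := by
      field_simp
    have e3 : ℓ * (1/4) ≤ ℓ * z.re := mul_le_mul_of_nonneg_left hre4 hℓ.le
    have e4 : ℓ/4 = ℓ * (1/4) := by ring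
    exact le_trans (le_trans e1 (le_of_eq e2)) (le_trans (le_of_eq e4) e3)
  have hkrnd : |t - ((round t : ℤ):ℝ)| ≤ 1/2 := abs_sub_round t
  have hkz1 : 1 ≤ round t := by
    have h1 : (0:ℝ) < ((round t : ℤ):ℝ) := by
      have := le_abs_self (t - ((round t : ℤ):ℝ))
      have := neg_abs_le (t - ((round t : ℤ):ℝ))
      linarith
    have h2 : (0:ℤ) < round t := by exact_mod_cast h1
    omega
  refine ⟨(round t).toNat, by omega, ?_⟩
  have hkcast : (((round t).toNat : ℕ) : ℝ) = ((round t : ℤ) : ℝ) := by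
    rw [show (((round t).toNat : ℕ) : ℝ) = (((round t).toNat : ℤ) : ℝ) by push_cast; ring,
      Int.toNat_of_nonneg (by omega)]
  set k : ℕ := (round t).toNat with hkdef
  have hzre : z.re = t * (Real.pi * h) / ℓ := by
    rw [htdef]; field_simp
  have hrebnd : |z.re - Real.pi * h * (k:ℝ) / ℓ| ≤ Real.pi*h/(2*ℓ) := by
    have e1 : z.re - Real.pi * h * (k:ℝ) / ℓ = (Real.pi*h/ℓ) * (t - ((round t : ℤ):ℝ)) := by
      rw [hzre, hkcast]; field_simp
    rw [e1, abs_mul, abs_of_pos (by positivity : (0:ℝ) < Real.pi*h/ℓ)]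
    calc Real.pi*h/ℓ * |t - ((round t : ℤ):ℝ)| ≤ Real.pi*h/ℓ * (1/2) :=
          mul_le_mul_of_nonneg_left hkrnd (by positivity)
    _ = Real.pi*h/(2*ℓ) := by
          have h21 : x₂ - x₁ ≠ 0 := by linarith
          field_simp
  have hmain := Complex.norm_le_abs_re_add_abs_im
    (z - ((((Real.pi * h * (k:ℝ) / (x₂ - x₁) : ℝ)) : ℂ)
      - Complex.I * (((β₁ + β₂) / (2 * (x₂ - x₁)) : ℝ) : ℂ)
        * (h : ℂ) * ((Real.log (1 / h) : ℝ) : ℂ)))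
  have hreT : (z - ((((Real.pi * h * (k:ℝ) / (x₂ - x₁) : ℝ)) : ℂ)
      - Complex.I * (((β₁ + β₂) / (2 * (x₂ - x₁)) : ℝ) : ℂ)
        * (h : ℂ) * ((Real.log (1 / h) : ℝ) : ℂ))).re
      = z.re - Real.pi * h * (k:ℝ) / ℓ := by
    simp only [Complex.sub_re, Complex.sub_im, Complex.mul_re, Complex.mul_im,
      Complex.I_re, Complex.I_im, Complex.ofReal_re, Complex.ofReal_im]
    ring
  have himT : (z - ((((Real.pi * h * (k:ℝ) / (x₂ - x₁) : ℝ)) : ℂ)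
      - Complex.I * (((β₁ + β₂) / (2 * (x₂ - x₁)) : ℝ) : ℂ)
        * (h : ℂ) * ((Real.log (1 / h) : ℝ) : ℂ))).im
      = z.im + (β/(2*ℓ))*h*L := by
    simp only [Complex.sub_re, Complex.sub_im, Complex.mul_re, Complex.mul_im,
      Complex.I_re, Complex.I_im, Complex.ofReal_re, Complex.ofReal_im]
    ring
  rw [hreT, himT] at hmain
  have hfin : Real.pi*h/(2*ℓ) + (M/(2*ℓ))*h ≤ C * h := by
    have e : Real.pi*h/(2*ℓ) + (M/(2*ℓ))*h = ((Real.pi+M)/(2*ℓ))*h := by ring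
    rw [e, hCdef, add_mul, one_mul]
    linarith
  calc ‖_‖ ≤ |z.re - Real.pi * h * (k:ℝ) / ℓ| + |z.im + (β/(2*ℓ))*h*L| := hmain
  _ ≤ Real.pi*h/(2*ℓ) + (M/(2*ℓ))*h := add_le_add hrebnd him
  _ ≤ C * h := hfin
end

section
/- Let N = 3, let h > 0, x₁ < x₂ < x₃ be real with ℓ₁ = x₂ − x₁ and ℓ₂ = x₃ − x₂, and let V₁, V₂, V₃ be nonzero real constants. Let z ∈ ℂ \ {0} be such that Ṽ_j ≠ 1 for j = 1, 2, 3. Then z is a resonance of the configuration (h; x₁, x₂, x₃; V₁, V₂, V₃) if and only if e^{−2 i (ℓ₁+ℓ₂) z/h} − R₁ R₂ e^{−2 i ℓ₂ z/h} − R₂ R₃ e^{−2 i ℓ₁ z/h} − R₁ (1 + 2 R₂) R₃ = 0. -/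
set_option maxHeartbeats 1000000


lemma exp_sq_mul_inv (u v : ℂ) :
    Complex.exp u ^ 2 * (Complex.exp v ^ 2)⁻¹ = Complex.exp (2*u - 2*v) := by
  rw [sq, sq, ← Complex.exp_add, ← Complex.exp_add, ← Complex.exp_neg, ← Complex.exp_add]
  congr 1; ring

/-- For three delta poles, `z ≠ 0` (with `Ṽ_j ≠ 1` for `j = 1,2,3`) is a resonance iff
`e^{-2i(ℓ₁+ℓ₂)z/h} - R₁R₂ e^{-2iℓ₂z/h} - R₂R₃ e^{-2iℓ₁z/h} - R₁(1+2R₂)R₃ = 0`,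
where `ℓ₁ = x₂ - x₁` and `ℓ₂ = x₃ - x₂`. -/
theorem three_delta_resonance_iff
    (h x₁ x₂ x₃ V₁ V₂ V₃ : ℝ) (hh : 0 < h) (hx12 : x₁ < x₂) (hx23 : x₂ < x₃)
    (hV₁ : V₁ ≠ 0) (hV₂ : V₂ ≠ 0) (hV₃ : V₃ ≠ 0) (z : ℂ) (hz : z ≠ 0)
    (hVt1 : Vt V₁ h z ≠ 1) (hVt2 : Vt V₂ h z ≠ 1) (hVt3 : Vt V₃ h z ≠ 1) :
    IsResonance 3 h ![x₁, x₂, x₃] ![V₁, V₂, V₃] z ↔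
      Complex.exp (-(2 * Complex.I * (((x₂ - x₁) + (x₃ - x₂) : ℝ) : ℂ) * z) / h)
        - Rc V₁ h z * Rc V₂ h z * Complex.exp (-(2 * Complex.I * ((x₃ - x₂ : ℝ) : ℂ) * z) / h)
        - Rc V₂ h z * Rc V₃ h z * Complex.exp (-(2 * Complex.I * ((x₂ - x₁ : ℝ) : ℂ) * z) / h)
        - Rc V₁ h z * (1 + 2 * Rc V₂ h z) * Rc V₃ h z = 0 := by
  have hh0 : (h : ℂ) ≠ 0 := by exact_mod_cast hh.ne'
  set c : ℂ := Complex.I * z * (h : ℂ) with hc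
  have hc0 : c ≠ 0 := by
    rw [hc]; exact mul_ne_zero (mul_ne_zero Complex.I_ne_zero hz) hh0
  have h2c0 : (2 : ℂ) * c ≠ 0 := mul_ne_zero two_ne_zero hc0
  have hIdiv : (h : ℂ) * z / Complex.I = -c := by rw [hc, Complex.div_I]; ring
  set E₁ : ℂ := Complex.exp (Complex.I * (x₁ : ℂ) * z / (h : ℂ)) with hE₁
  set E₂ : ℂ := Complex.exp (Complex.I * (x₂ : ℂ) * z / (h : ℂ)) with hE₂
  set E₃ : ℂ := Complex.exp (Complex.I * (x₃ : ℂ) * z / (h : ℂ)) with hE₃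
  have hE₁0 : E₁ ≠ 0 := by rw [hE₁]; exact Complex.exp_ne_zero _
  have hE₂0 : E₂ ≠ 0 := by rw [hE₂]; exact Complex.exp_ne_zero _
  have hE₃0 : E₃ ≠ 0 := by rw [hE₃]; exact Complex.exp_ne_zero _
  have hFE₁ : E₁ * E₁⁻¹ = 1 := mul_inv_cancel₀ hE₁0
  have hFE₂ : E₂ * E₂⁻¹ = 1 := mul_inv_cancel₀ hE₂0
  have hFE₃ : E₃ * E₃⁻¹ = 1 := mul_inv_cancel₀ hE₃0
  have hexp₁ : Complex.exp (-(Complex.I * (x₁ : ℂ) * z) / (h : ℂ)) = E₁⁻¹ := by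
    rw [hE₁, ← Complex.exp_neg, neg_div]
  have hexp₂ : Complex.exp (-(Complex.I * (x₂ : ℂ) * z) / (h : ℂ)) = E₂⁻¹ := by
    rw [hE₂, ← Complex.exp_neg, neg_div]
  have hexp₃ : Complex.exp (-(Complex.I * (x₃ : ℂ) * z) / (h : ℂ)) = E₃⁻¹ := by
    rw [hE₃, ← Complex.exp_neg, neg_div]
  -- transfer-matrix polynomials
  set A2 : ℂ := (V₃ : ℂ) * E₃^2 with hA2
  set B2 : ℂ := 2*c - (V₃ : ℂ) with hB2
  set A1 : ℂ := 2*c*A2 + (V₂ : ℂ)*(A2 + B2*E₂^2) with hA1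
  set B1 : ℂ := 2*c*B2*E₂^2 - (V₂ : ℂ)*(A2 + B2*E₂^2) with hB1
  set A0 : ℂ := 2*c*A1*E₂^2 + (V₁ : ℂ)*(A1*E₂^2 + B1*E₁^2) with hA0
  set Dpoly : ℂ := 2*c*B1*E₁^2 - (V₁ : ℂ)*(A1*E₂^2 + B1*E₁^2) with hDp
  clear_value Dpoly A0 B1 A1 B2 A2 E₁ E₂ E₃ c
  -- nonvanishing of 2c - Vⱼ
  have hsub : ∀ V : ℝ, Vt V h z ≠ 1 → 2 * c - (V : ℂ) ≠ 0 := by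
    intro V hV hcontra
    apply hV
    have hVeq : (V : ℂ) = 2 * c := by linear_combination -hcontra
    rw [Vt, hVeq, hc]
    field_simp
  have hsub₁ := hsub V₁ hVt1
  have hsub₂ := hsub V₂ hVt2
  have hsub₃ := hsub V₃ hVt3
  -- reflection coefficients
  have hRc : ∀ V : ℝ, Vt V h z ≠ 1 → Rc V h z = (V : ℂ) / (2 * c - V) := by
    intro V hV
    have hVt' : Vt V h z = (V : ℂ) / (2 * c) := by rw [Vt, hc]; ring_nf
    have hsubV := hsub V hV
    have hrem : (1 : ℂ) - (V:ℂ)/(2*c) = (2*c - (V:ℂ))/(2*c) := by field_simp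
    rw [Rc, hVt', hrem]
    rw [div_div_div_eq]
    rw [mul_comm ((V:ℂ)) (2*c), mul_div_mul_left _ _ h2c0]
  have hRc₁ := hRc V₁ hVt1
  have hRc₂ := hRc V₂ hVt2
  have hRc₃ := hRc V₃ hVt3
  -- exponentials in the target
  have hT1 : Complex.exp (-(2 * Complex.I * (((x₂ - x₁) + (x₃ - x₂) : ℝ) : ℂ) * z) / h)
      = E₁^2 * (E₃^2)⁻¹ := by
    rw [hE₁, hE₃, exp_sq_mul_inv]; congr 1; push_cast; field_simp; ring
  have hT2 : Complex.exp (-(2 * Complex.I * ((x₃ - x₂ : ℝ) : ℂ) * z) / h)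
      = E₂^2 * (E₃^2)⁻¹ := by
    rw [hE₂, hE₃, exp_sq_mul_inv]; congr 1; push_cast; field_simp; ring
  have hT3 : Complex.exp (-(2 * Complex.I * ((x₂ - x₁ : ℝ) : ℂ) * z) / h)
      = E₁^2 * (E₂^2)⁻¹ := by
    rw [hE₁, hE₂, exp_sq_mul_inv]; congr 1; push_cast; field_simp; ring
  have hu1 : (2*c - (V₁:ℂ)) * (2*c - (V₁:ℂ))⁻¹ = 1 := mul_inv_cancel₀ hsub₁
  have hu2 : (2*c - (V₂:ℂ)) * (2*c - (V₂:ℂ))⁻¹ = 1 := mul_inv_cancel₀ hsub₂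
  have hu3 : (2*c - (V₃:ℂ)) * (2*c - (V₃:ℂ))⁻¹ = 1 := mul_inv_cancel₀ hsub₃
  -- the bridge identity
  have hbridge :
      (Complex.exp (-(2 * Complex.I * (((x₂ - x₁) + (x₃ - x₂) : ℝ) : ℂ) * z) / h)
        - Rc V₁ h z * Rc V₂ h z * Complex.exp (-(2 * Complex.I * ((x₃ - x₂ : ℝ) : ℂ) * z) / h)
        - Rc V₂ h z * Rc V₃ h z * Complex.exp (-(2 * Complex.I * ((x₂ - x₁ : ℝ) : ℂ) * z) / h)
        - Rc V₁ h z * (1 + 2 * Rc V₂ h z) * Rc V₃ h z)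
        * ((2*c - V₁) * (2*c - V₂) * (2*c - V₃) * E₂^2 * E₃^2) = Dpoly := by
    rw [hRc₁, hRc₂, hRc₃, hT1, hT2, hT3]
    linear_combination
      (E₁^2*(2*c-(V₁:ℂ))*(2*c-(V₂:ℂ))*(2*c-(V₃:ℂ))*E₂^2*(E₃*E₃⁻¹+1))*hFE₃
      - (V₁:ℂ)*(V₂:ℂ)*(2*c-(V₃:ℂ))*E₂^4*((2*c-(V₂:ℂ))*(2*c-(V₂:ℂ))⁻¹*(E₃*E₃⁻¹)^2)*hu1
      - (V₁:ℂ)*(V₂:ℂ)*(2*c-(V₃:ℂ))*E₂^4*(E₃*E₃⁻¹)^2*hu2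
      - (V₁:ℂ)*(V₂:ℂ)*(2*c-(V₃:ℂ))*E₂^4*(E₃*E₃⁻¹+1)*hFE₃
      - (V₂:ℂ)*(V₃:ℂ)*E₁^2*(2*c-(V₁:ℂ))*E₃^2*((2*c-(V₃:ℂ))*(2*c-(V₃:ℂ))⁻¹)*(E₂*E₂⁻¹)^2*hu2
      - (V₂:ℂ)*(V₃:ℂ)*E₁^2*(2*c-(V₁:ℂ))*E₃^2*(E₂*E₂⁻¹)^2*hu3
      - (V₂:ℂ)*(V₃:ℂ)*E₁^2*(2*c-(V₁:ℂ))*E₃^2*(E₂*E₂⁻¹+1)*hFE₂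
      - (V₁:ℂ)*(V₃:ℂ)*E₂^2*E₃^2*(2*c-(V₂:ℂ))*((2*c-(V₃:ℂ))*(2*c-(V₃:ℂ))⁻¹)*hu1
      - (V₁:ℂ)*(V₃:ℂ)*E₂^2*E₃^2*(2*c-(V₂:ℂ))*hu3
      - 2*(V₁:ℂ)*(V₂:ℂ)*(V₃:ℂ)*E₂^2*E₃^2*((2*c-(V₂:ℂ))*(2*c-(V₂:ℂ))⁻¹)*((2*c-(V₃:ℂ))*(2*c-(V₃:ℂ))⁻¹)*hu1
      - 2*(V₁:ℂ)*(V₂:ℂ)*(V₃:ℂ)*E₂^2*E₃^2*((2*c-(V₃:ℂ))*(2*c-(V₃:ℂ))⁻¹)*hu2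
      - 2*(V₁:ℂ)*(V₂:ℂ)*(V₃:ℂ)*E₂^2*E₃^2*hu3
      - hDp - (2*c-(V₁:ℂ))*E₁^2*hB1 + (V₁:ℂ)*E₂^2*hA1
      - ((2*c-(V₁:ℂ))*E₁^2*(-(V₂:ℂ)) + (-(V₁:ℂ)*E₂^2)*(2*c+(V₂:ℂ)))*hA2
      - ((2*c-(V₁:ℂ))*(2*c-(V₂:ℂ))*E₁^2*E₂^2 - (V₁:ℂ)*(V₂:ℂ)*E₂^4)*hB2
  have hK0 : (2*c - (V₁:ℂ)) * (2*c - V₂) * (2*c - V₃) * E₂^2 * E₃^2 ≠ 0 :=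
    mul_ne_zero (mul_ne_zero (mul_ne_zero (mul_ne_zero hsub₁ hsub₂) hsub₃)
      (pow_ne_zero 2 hE₂0)) (pow_ne_zero 2 hE₃0)
  constructor
  · -- forward direction
    rintro ⟨vp, vm, hne, h0, hN, hcond⟩
    have i0c : (Fin.castSucc (0 : Fin 3)) = (0 : Fin 4) := rfl
    have i0s : (Fin.succ (0 : Fin 3)) = (1 : Fin 4) := rfl
    have i1c : (Fin.castSucc (1 : Fin 3)) = (1 : Fin 4) := rfl
    have i1s : (Fin.succ (1 : Fin 3)) = (2 : Fin 4) := rfl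
    have i2c : (Fin.castSucc (2 : Fin 3)) = (2 : Fin 4) := rfl
    have i2s : (Fin.succ (2 : Fin 3)) = (3 : Fin 4) := rfl
    have ilast : (Fin.last 3) = (3 : Fin 4) := rfl
    rw [ilast] at hN
    obtain ⟨hC1, hJ1⟩ := hcond 0
    obtain ⟨hC2, hJ2⟩ := hcond 1
    obtain ⟨hC3, hJ3⟩ := hcond 2
    simp only [Matrix.cons_val_zero, Matrix.cons_val_one, Matrix.head_cons,
      Matrix.cons_val_two, Matrix.tail_cons, Fin.isValue,
      i0c, i0s, i1c, i1s, i2c, i2s] at hC1 hJ1 hC2 hJ2 hC3 hJ3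
    rw [hexp₁, ← hE₁] at hC1 hJ1
    rw [hexp₂, ← hE₂] at hC2 hJ2
    rw [hexp₃, ← hE₃] at hC3 hJ3
    rw [hIdiv] at hJ1 hJ2 hJ3
    rw [h0] at hC1 hJ1
    rw [hN] at hC3 hJ3
    -- transfer relations
    have hvm2 : 2*c*(vm 2) = (V₃:ℂ)*(vp 3)*E₃^2 := by
      linear_combination (-c*E₃)*hC3 - E₃*hJ3 - 2*c*(vm 2)*hFE₃
    have hvp2 : 2*c*(vp 2) = (2*c - (V₃:ℂ))*(vp 3) := by
      linear_combination (-c*E₃⁻¹)*hC3 + E₃⁻¹*hJ3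
        - (2*c*(vp 2) - 2*c*(vp 3) + (V₃:ℂ)*(vp 3))*hFE₃
    have hvm1 : 2*c*(vm 1) = 2*c*(vm 2) + (V₂:ℂ)*((vm 2) + (vp 2)*E₂^2) := by
      linear_combination (-c*E₂)*hC2 - E₂*hJ2 - (2*c*(vm 1) - 2*c*(vm 2) - (V₂:ℂ)*(vm 2))*hFE₂
    have hvp1 : 2*c*(vp 1)*E₂^2 = 2*c*(vp 2)*E₂^2 - (V₂:ℂ)*((vm 2) + (vp 2)*E₂^2) := by
      linear_combination (-c*E₂)*hC2 + E₂*hJ2 - (V₂:ℂ)*(vm 2)*hFE₂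
    have hvm0 : 2*c*(vm 0) = 2*c*(vm 1) + (V₁:ℂ)*((vm 1) + (vp 1)*E₁^2) := by
      linear_combination (-c*E₁)*hC1 - E₁*hJ1 - (2*c*(vm 0) - 2*c*(vm 1) - (V₁:ℂ)*(vm 1))*hFE₁
    have hfin : 2*c*(vp 1)*E₁^2 = (V₁:ℂ)*((vm 1) + (vp 1)*E₁^2) := by
      linear_combination (c*E₁)*hC1 - E₁*hJ1 + (V₁:ℂ)*(vm 1)*hFE₁
    -- vp 3 ≠ 0
    have hcan : ∀ u : ℂ, 2*c*u = 0 → u = 0 := by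
      intro u hu
      rcases mul_eq_zero.mp hu with h' | h'
      · exact absurd h' h2c0
      · exact h'
    have hvp3 : vp 3 ≠ 0 := by
      intro h30
      have hm2 : vm 2 = 0 := hcan _ (by rw [hvm2, h30]; ring)
      have hp2 : vp 2 = 0 := hcan _ (by rw [hvp2, h30]; ring)
      have hm1 : vm 1 = 0 := hcan _ (by rw [hvm1, hm2, hp2]; ring)
      have hp1E : 2*c*((vp 1)*E₂^2) = 0 := by
        linear_combination hvp1 + (2*c - (V₂:ℂ))*E₂^2*hp2 - (V₂:ℂ)*hm2
      have hp1 : vp 1 = 0 := by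
        rcases mul_eq_zero.mp (hcan _ hp1E) with h' | h'
        · exact h'
        · exact absurd h' (pow_ne_zero 2 hE₂0)
      have hm0 : vm 0 = 0 := hcan _ (by rw [hvm0, hm1, hp1]; ring)
      have hvpz : vp = 0 := by
        funext i
        fin_cases i
        · exact h0
        · exact hp1
        · exact hp2
        · exact h30
      have hvmz : vm = 0 := by
        funext i
        fin_cases i
        · exact hm0
        · exact hm1
        · exact hm2
        · exact hN
      rcases hne with hne | hne
      · exact hne hvpz
      · exact hne hvmz
    -- combine the chain
    have h1 : (2*c)^2*(vm 1) = A1 * (vp 3) := by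
      linear_combination (2*c)*hvm1 + (2*c + (V₂:ℂ))*hvm2 + (V₂:ℂ)*E₂^2*hvp2
        - (vp 3)*hA1 - (vp 3)*(2*c + (V₂:ℂ))*hA2 - (vp 3)*(V₂:ℂ)*E₂^2*hB2
    have h2 : (2*c)^2*(vp 1)*E₂^2 = B1 * (vp 3) := by
      linear_combination (2*c)*hvp1 + E₂^2*(2*c - (V₂:ℂ))*hvp2 - (V₂:ℂ)*hvm2
        - (vp 3)*hB1 - (vp 3)*(2*c - (V₂:ℂ))*E₂^2*hB2 + (vp 3)*(V₂:ℂ)*hA2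
    have hKeyD : Dpoly * (vp 3) = 0 := by
      linear_combination (2*c)^2*E₂^2*hfin - (2*c - (V₁:ℂ))*E₁^2*h2 + (V₁:ℂ)*E₂^2*h1
        + (vp 3)*hDp
    have hD : Dpoly = 0 := (mul_eq_zero.mp hKeyD).resolve_right hvp3
    exact (mul_eq_zero.mp (hbridge.trans hD)).resolve_right hK0
  · -- reverse direction
    intro hT
    have hD : Dpoly = 0 := by rw [← hbridge, hT, zero_mul]
    refine ⟨![0, 2*c*B1, (2*c)^2*E₂^2*B2, (2*c)^3*E₂^2],
            ![A0, 2*c*E₂^2*A1, (2*c)^2*E₂^2*A2, 0], Or.inl ?_, rfl, rfl, ?_⟩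
    · intro hcontra
      have h3' : (2*c)^3*E₂^2 = 0 := congrFun hcontra 3
      exact mul_ne_zero (pow_ne_zero 3 h2c0) (pow_ne_zero 2 hE₂0) h3'
    · intro j
      fin_cases j
      all_goals
        simp only [Fin.zero_eta, Fin.mk_one, Fin.isValue, Fin.reduceFinMk,
          Matrix.cons_val_zero, Matrix.cons_val_one, Matrix.head_cons,
          Matrix.cons_val_two, Matrix.tail_cons]
      · constructor
        · show -A0 * _ - 0 * _ + (2*c*E₂^2*A1) * _ + (2*c*B1) * _ = 0
          rw [hexp₁, ← hE₁]
          linear_combination (-E₁⁻¹)*hA0 + (-(2*c)*B1*E₁)*hFE₁ + E₁⁻¹*hD + (-E₁⁻¹)*hDp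
        · show (↑h * z / Complex.I) * (A0 * _ - 0 * _ - (2*c*E₂^2*A1) * _ + (2*c*B1) * _)
            + _ * ((2*c*E₂^2*A1) * _ + (2*c*B1) * _) = 0
          rw [hexp₁, ← hE₁, hIdiv]
          linear_combination (-c*E₁⁻¹)*hA0 + (-c*E₁⁻¹)*hD + (c*E₁⁻¹)*hDp
            + (2*c*B1*(c - (V₁:ℂ))*E₁)*hFE₁
      · constructor
        · show -(2*c*E₂^2*A1) * _ - (2*c*B1) * _ + ((2*c)^2*E₂^2*A2) * _
            + ((2*c)^2*E₂^2*B2) * _ = 0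
          rw [hexp₂, ← hE₂]
          linear_combination (-(2*c)*E₂^2*E₂⁻¹)*hA1 + (-(2*c)*E₂)*hB1
            + (-(2*c)*(V₂:ℂ)*(A2 + B2*E₂^2)*E₂)*hFE₂
        · show (↑h * z / Complex.I) * ((2*c*E₂^2*A1) * _ - (2*c*B1) * _
              - ((2*c)^2*E₂^2*A2) * _ + ((2*c)^2*E₂^2*B2) * _)
            + _ * (((2*c)^2*E₂^2*A2) * _ + ((2*c)^2*E₂^2*B2) * _) = 0
          rw [hexp₂, ← hE₂, hIdiv]
          linear_combination (-c*(2*c)*E₂^2*E₂⁻¹)*hA1 + (c*(2*c)*E₂)*hB1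
            + (2*c^2*(V₂:ℂ)*(A2 - B2*E₂^2)*E₂)*hFE₂
      · constructor
        · show -((2*c)^2*E₂^2*A2) * _ - ((2*c)^2*E₂^2*B2) * _ + 0 * _
            + ((2*c)^3*E₂^2) * _ = 0
          rw [hexp₃, ← hE₃]
          linear_combination (-(2*c)^2*E₂^2*E₃⁻¹)*hA2 + (-(2*c)^2*E₂^2*E₃)*hB2
            + (-(2*c)^2*E₂^2*(V₃:ℂ)*E₃)*hFE₃
        · show (↑h * z / Complex.I) * (((2*c)^2*E₂^2*A2) * _ - ((2*c)^2*E₂^2*B2) * _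
              - 0 * _ + ((2*c)^3*E₂^2) * _)
            + _ * (0 * _ + ((2*c)^3*E₂^2) * _) = 0
          rw [hexp₃, ← hE₃, hIdiv]
          linear_combination (-c*(2*c)^2*E₂^2*E₃⁻¹)*hA2 + (c*(2*c)^2*E₂^2*E₃)*hB2
            + (-c*(2*c)^2*E₂^2*(V₃:ℂ)*E₃)*hFE₃
end

section
/- Let N = 3, x₂ − x₁ = x₃ − x₂ = ℓ > 0, C₁, C₂, C₃ ∈ ℝ \ {0}, β₁, β₂, β₃ > 0, and for h > 0 set V_j = C_j h^{1+β_j}. Then there exist positive real numbers γ₊ and γ₋ (depending only on ℓ, β₁, β₂, β₃, and possibly equal) and constants C > 0, h₀ > 0 such that for every h ∈ (0, h₀) and every resonance z of the configuration (h; x₁, x₂, x₃; V₁, V₂, V₃) satisfying 1/2 ≤ |z| ≤ 2 and Re z > 0, there is a positive integer k with either | z − ( π h k / ℓ − i γ₊ h log(1/h) ) | ≤ C h or | z − ( π h k / ℓ − i γ₋ h log(1/h) ) | ≤ C h. -/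
noncomputable def Complex.abs : AbsoluteValue ℂ ℝ := IsAbsoluteValue.toAbsoluteValue (norm : ℂ → ℝ)

lemma Complex.abs_apply (z : ℂ) : Complex.abs z = ‖z‖ := rfl

lemma Complex.abs_ofReal (r : ℝ) : Complex.abs (r : ℂ) = |r| := by
  rw [Complex.abs_apply, Complex.norm_real, Real.norm_eq_abs]

lemma Complex.abs_two : Complex.abs 2 = 2 := by
  rw [Complex.abs_apply]; norm_num

lemma Complex.abs_I : Complex.abs Complex.I = 1 := by
  rw [Complex.abs_apply, Complex.norm_I]

lemma Complex.abs_exp (z : ℂ) : Complex.abs (Complex.exp z) = Real.exp z.re := by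
  rw [Complex.abs_apply, Complex.norm_exp]

lemma det_vanish (μ V₁ V₂ V₃ w u₁ u₂ u₃ : ℂ)
    (h1 : μ * u₁ = V₁ * u₁ + V₂ * u₂ * w + V₃ * u₃ * w ^ 2)
    (h2 : μ * u₂ = V₁ * u₁ * w + V₂ * u₂ + V₃ * u₃ * w)
    (h3 : μ * u₃ = V₁ * u₁ * w ^ 2 + V₂ * u₂ * w + V₃ * u₃)
    (hu : ¬(u₁ = 0 ∧ u₂ = 0 ∧ u₃ = 0)) :
    (μ - V₁) * (μ - V₂) * (μ - V₃) + (2 * V₁ * V₂ * V₃ - μ * V₂ * (V₁ + V₃)) * w ^ 2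
      + (-(V₁ * V₃) * (μ + V₂)) * w ^ 4 = 0 := by
  set D : ℂ := (μ - V₁) * (μ - V₂) * (μ - V₃) + (2 * V₁ * V₂ * V₃ - μ * V₂ * (V₁ + V₃)) * w ^ 2
      + (-(V₁ * V₃) * (μ + V₂)) * w ^ 4 with hD
  have k1 : D * u₁ = 0 := by
    rw [hD]
    linear_combination ((μ - V₂) * (μ - V₃) - V₂ * V₃ * w ^ 2) * h1
      + (V₂ * w * (μ - V₃) + V₂ * V₃ * w ^ 3) * h2
      + (V₂ * V₃ * w ^ 2 + V₃ * w ^ 2 * (μ - V₂)) * h3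
  have k2 : D * u₂ = 0 := by
    rw [hD]
    linear_combination (V₁ * w * (μ - V₃) + V₁ * V₃ * w ^ 3) * h1
      + ((μ - V₁) * (μ - V₃) - V₁ * V₃ * w ^ 4) * h2
      + (V₃ * w * (μ - V₁) + V₁ * V₃ * w ^ 3) * h3
  have k3 : D * u₃ = 0 := by
    rw [hD]
    linear_combination (V₁ * V₂ * w ^ 2 + V₁ * w ^ 2 * (μ - V₂)) * h1
      + (V₂ * w * (μ - V₁) + V₁ * V₂ * w ^ 3) * h2
      + ((μ - V₁) * (μ - V₂) - V₁ * V₂ * w ^ 2) * h3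
  by_contra hDne
  exact hu ⟨by rcases mul_eq_zero.1 k1 with h | h; exact absurd h hDne; exact h,
    by rcases mul_eq_zero.1 k2 with h | h; exact absurd h hDne; exact h,
    by rcases mul_eq_zero.1 k3 with h | h; exact absurd h hDne; exact h⟩

lemma resonance_system (h ℓ x₁ V₁ V₂ V₃ : ℝ) (z : ℂ) (hh : (h:ℂ) ≠ 0) (hz : z ≠ 0)
    (hres : IsResonance 3 h ![x₁, x₁ + ℓ, x₁ + 2 * ℓ] ![V₁, V₂, V₃] z) :
    ∃ u₁ u₂ u₃ : ℂ, ¬(u₁ = 0 ∧ u₂ = 0 ∧ u₃ = 0) ∧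
      (2 * Complex.I * h * z) * u₁ = V₁ * u₁ + V₂ * u₂ * Complex.exp (Complex.I * ℓ * z / h)
          + V₃ * u₃ * Complex.exp (Complex.I * ℓ * z / h) ^ 2 ∧
      (2 * Complex.I * h * z) * u₂ = V₁ * u₁ * Complex.exp (Complex.I * ℓ * z / h) + V₂ * u₂
          + V₃ * u₃ * Complex.exp (Complex.I * ℓ * z / h) ∧
      (2 * Complex.I * h * z) * u₃ = V₁ * u₁ * Complex.exp (Complex.I * ℓ * z / h) ^ 2
          + V₂ * u₂ * Complex.exp (Complex.I * ℓ * z / h) + V₃ * u₃ := by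
  obtain ⟨vp, vm, hne, hvp0, hvm3, hj⟩ := hres
  have e0 := hj 0
  have e1 := hj 1
  have e2 := hj 2
  simp only [Matrix.cons_val_zero, Matrix.cons_val_one, Matrix.head_cons,
    Matrix.cons_val_two, Matrix.tail_cons, Fin.castSucc_zero, Fin.succ_zero_eq_one,
    Fin.castSucc_one, show (Fin.succ 1 : Fin 4) = 2 from rfl,
    show (Fin.castSucc 2 : Fin 4) = 2 from rfl, show (Fin.succ 2 : Fin 4) = 3 from rfl,
    Complex.div_I] at e0 e1 e2
  rw [show (Fin.last 3 : Fin 4) = 3 from rfl] at hvm3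
  obtain ⟨c0, j0⟩ := e0
  obtain ⟨c1, j1⟩ := e1
  obtain ⟨c2, j2⟩ := e2
  set w : ℂ := Complex.exp (Complex.I * ℓ * z / h) with hw
  set μ : ℂ := 2 * Complex.I * h * z with hμ
  have hμne : μ ≠ 0 := by
    simp only [hμ]
    exact mul_ne_zero (mul_ne_zero (mul_ne_zero two_ne_zero Complex.I_ne_zero) hh) hz
  set E₀ : ℂ := Complex.exp (Complex.I * (x₁:ℝ) * z / h) with hE0
  set E₁ : ℂ := Complex.exp (Complex.I * ((x₁ + ℓ : ℝ):ℂ) * z / h) with hE1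
  set E₂ : ℂ := Complex.exp (Complex.I * ((x₁ + 2*ℓ : ℝ):ℂ) * z / h) with hE2
  set F₀ : ℂ := Complex.exp (-(Complex.I * (x₁:ℝ) * z) / h) with hF0
  set F₁ : ℂ := Complex.exp (-(Complex.I * ((x₁ + ℓ : ℝ):ℂ) * z) / h) with hF1
  set F₂ : ℂ := Complex.exp (-(Complex.I * ((x₁ + 2*ℓ : ℝ):ℂ) * z) / h) with hF2
  -- exponential product identities
  have id00 : E₀ * F₀ = 1 := by
    rw [hE0, hF0, ← Complex.exp_add, show Complex.I * (x₁:ℝ) * z / h + -(Complex.I * (x₁:ℝ) * z) / h = 0 by ring, Complex.exp_zero]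
  have id11 : E₁ * F₁ = 1 := by
    rw [hE1, hF1, ← Complex.exp_add, show Complex.I * ((x₁ + ℓ:ℝ):ℂ) * z / h + -(Complex.I * ((x₁ + ℓ:ℝ):ℂ) * z) / h = 0 by ring, Complex.exp_zero]
  have id22 : E₂ * F₂ = 1 := by
    rw [hE2, hF2, ← Complex.exp_add, show Complex.I * ((x₁ + 2*ℓ:ℝ):ℂ) * z / h + -(Complex.I * ((x₁ + 2*ℓ:ℝ):ℂ) * z) / h = 0 by ring, Complex.exp_zero]
  have id10 : E₁ * F₀ = w := by
    rw [hE1, hF0, hw, ← Complex.exp_add]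
    congr 1
    push_cast
    ring
  have id21 : E₂ * F₁ = w := by
    rw [hE2, hF1, hw, ← Complex.exp_add]
    congr 1
    push_cast
    ring
  have id20 : E₂ * F₀ = w ^ 2 := by
    rw [hE2, hF0, hw, sq, ← Complex.exp_add, ← Complex.exp_add]
    congr 1
    push_cast
    ring
  -- the step relations
  set u₁ : ℂ := vm 1 * F₀ + vp 1 * E₀ with hu1
  set u₂ : ℂ := vm 2 * F₁ + vp 2 * E₁ with hu2
  set u₃ : ℂ := vm 3 * F₂ + vp 3 * E₂ with hu3
  have P0 : vp 1 * μ = vp 0 * μ + V₁ * u₁ * F₀ := by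
    rw [hμ, hu1]
    linear_combination (-F₀) * j0 + (h * z * Complex.I * F₀) * c0
      + (2 * Complex.I * h * z * (vp 0 - vp 1)) * id00
  have P1 : vp 2 * μ = vp 1 * μ + V₂ * u₂ * F₁ := by
    rw [hμ, hu2]
    linear_combination (-F₁) * j1 + (h * z * Complex.I * F₁) * c1
      + (2 * Complex.I * h * z * (vp 1 - vp 2)) * id11
  have P2 : vp 3 * μ = vp 2 * μ + V₃ * u₃ * F₂ := by
    rw [hμ, hu3]
    linear_combination (-F₂) * j2 + (h * z * Complex.I * F₂) * c2
      + (2 * Complex.I * h * z * (vp 2 - vp 3)) * id22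
  have M0 : vm 0 * μ = vm 1 * μ + V₁ * u₁ * E₀ := by
    rw [hμ, hu1]
    linear_combination (-E₀) * j0 + (-(h * z * Complex.I * E₀)) * c0
      + (2 * Complex.I * h * z * (vm 1 - vm 0)) * id00
  have M1 : vm 1 * μ = vm 2 * μ + V₂ * u₂ * E₁ := by
    rw [hμ, hu2]
    linear_combination (-E₁) * j1 + (-(h * z * Complex.I * E₁)) * c1
      + (2 * Complex.I * h * z * (vm 2 - vm 1)) * id11
  have M2 : vm 2 * μ = vm 3 * μ + V₃ * u₃ * E₂ := by
    rw [hμ, hu3]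
    linear_combination (-E₂) * j2 + (-(h * z * Complex.I * E₂)) * c2
      + (2 * Complex.I * h * z * (vm 3 - vm 2)) * id22
  refine ⟨u₁, u₂, u₃, ?_, ?_, ?_, ?_⟩
  · -- nonvanishing
    rintro ⟨h1, h2, h3⟩
    have hvp1 : vp 1 = 0 := by
      have := P0; rw [h1, hvp0] at this
      simpa [hμne] using this
    have hvp2 : vp 2 = 0 := by
      have := P1; rw [h2, hvp1] at this
      simpa [hμne] using this
    have hvp3 : vp 3 = 0 := by
      have := P2; rw [h3, hvp2] at this
      simpa [hμne] using this
    have hvm2 : vm 2 = 0 := by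
      have := M2; rw [h3, hvm3] at this
      simpa [hμne] using this
    have hvm1 : vm 1 = 0 := by
      have := M1; rw [h2, hvm2] at this
      simpa [hμne] using this
    have hvm0 : vm 0 = 0 := by
      have := M0; rw [h1, hvm1] at this
      simpa [hμne] using this
    have hvp : vp = 0 := by
      funext i
      fin_cases i <;> simpa using by first | exact hvp0 | exact hvp1 | exact hvp2 | exact hvp3
    have hvm : vm = 0 := by
      funext i
      fin_cases i <;> simpa using by first | exact hvm0 | exact hvm1 | exact hvm2 | exact hvm3
    rcases hne with hne | hne <;> [exact hne hvp; exact hne hvm]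
  · show μ * u₁ = V₁ * u₁ + V₂ * u₂ * w + V₃ * u₃ * w ^ 2
    rw [hu1]
    linear_combination F₀ * M1 + F₀ * M2 + E₀ * P0 + (V₁ * u₁) * id00
      + (V₂ * u₂) * id10 + (V₃ * u₃) * id20 + (μ * F₀) * hvm3 + (μ * E₀) * hvp0
  · show μ * u₂ = V₁ * u₁ * w + V₂ * u₂ + V₃ * u₃ * w
    rw [hu2]
    linear_combination F₁ * M2 + E₁ * P1 + E₁ * P0 + (V₁ * u₁) * id10
      + (V₂ * u₂) * id11 + (V₃ * u₃) * id21 + (μ * F₁) * hvm3 + (μ * E₁) * hvp0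
  · show μ * u₃ = V₁ * u₁ * w ^ 2 + V₂ * u₂ * w + V₃ * u₃
    rw [hu3]
    linear_combination E₂ * P2 + E₂ * P1 + E₂ * P0 + (V₁ * u₁) * id20
      + (V₂ * u₂) * id21 + (V₃ * u₃) * id22 + (μ * F₂) * hvm3 + (μ * E₂) * hvp0

lemma small_rpow (c t p : ℝ) (hp : 0 < p) (ht : 0 < t) :
    ∃ h₀ > (0:ℝ), ∀ h : ℝ, 0 < h → h < h₀ → c * h ^ p ≤ t := by
  rcases le_or_gt c 0 with hc | hc
  · exact ⟨1, one_pos, fun h hh _ => le_trans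
      (mul_nonpos_of_nonpos_of_nonneg hc (Real.rpow_nonneg hh.le p)) ht.le⟩
  · refine ⟨(t / c) ^ (1/p), Real.rpow_pos_of_pos (div_pos ht hc) _, fun h hh hlt => ?_⟩
    have h1 : h ^ p ≤ ((t / c) ^ (1/p)) ^ p :=
      Real.rpow_le_rpow hh.le hlt.le hp.le
    have h2 : ((t / c) ^ (1/p)) ^ p = t / c := by
      rw [← Real.rpow_mul (div_pos ht hc).le, one_div, inv_mul_cancel₀ hp.ne', Real.rpow_one]
    have h3 : h ^ p ≤ t / c := h2 ▸ h1
    calc c * h ^ p ≤ c * (t / c) := by nlinarith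
      _ = t := by field_simp

lemma log_pinch (ℓ h t m M : ℝ) (z : ℂ) (hℓ : 0 < ℓ) (hh : 0 < h)
    (hm : 0 < m)
    (h1 : m ≤ h ^ t * Real.exp (-(2 * ℓ * z.im) / h))
    (h2 : h ^ t * Real.exp (-(2 * ℓ * z.im) / h) ≤ M) :
    |z.im + (t / (2 * ℓ)) * h * Real.log (1 / h)| ≤ ((|Real.log m| + |Real.log M|) / (2 * ℓ)) * h := by
  have hX : (0:ℝ) < Real.exp (-(2 * ℓ * z.im) / h) := Real.exp_pos _
  have hht : (0:ℝ) < h ^ t := Real.rpow_pos_of_pos hh t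
  have l1 : Real.log m ≤ t * Real.log h + (-(2 * ℓ * z.im) / h) := by
    have := Real.log_le_log hm h1
    rwa [Real.log_mul (ne_of_gt hht) (ne_of_gt hX), Real.log_rpow hh, Real.log_exp] at this
  have l2 : t * Real.log h + (-(2 * ℓ * z.im) / h) ≤ Real.log M := by
    have := Real.log_le_log (by positivity) h2
    rwa [Real.log_mul (ne_of_gt hht) (ne_of_gt hX), Real.log_rpow hh, Real.log_exp] at this
  set G : ℝ := t * Real.log h + (-(2 * ℓ * z.im) / h) with hG
  have key : z.im + (t / (2 * ℓ)) * h * Real.log (1 / h) = -(h / (2 * ℓ)) * G := by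
    rw [hG, one_div, Real.log_inv]
    field_simp
    ring
  have hGabs : |G| ≤ |Real.log m| + |Real.log M| := by
    rw [abs_le]
    constructor
    · linarith [neg_abs_le (Real.log m), abs_nonneg (Real.log M)]
    · linarith [le_abs_self (Real.log M), abs_nonneg (Real.log m)]
  rw [key, abs_mul, abs_neg, abs_of_pos (by positivity : (0:ℝ) < h / (2*ℓ))]
  rw [div_mul_eq_mul_div, div_mul_eq_mul_div]
  rw [div_le_div_iff₀ (by positivity) (by positivity)]
  nlinarith [mul_le_mul_of_nonneg_right hGabs (mul_nonneg hh.le (by positivity : (0:ℝ) ≤ 2*ℓ))]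

lemma assemble (ℓ h Cim γ : ℝ) (z : ℂ) (hℓ : 0 < ℓ) (hh : 0 < h) (hzre : 0 < z.re)
    (him : |z.im + γ * h * Real.log (1 / h)| ≤ Cim * h) :
    ∃ k : ℕ, 0 < k ∧ Complex.abs (z - (((Real.pi * h * k / ℓ : ℝ) : ℂ)
      - Complex.I * ((γ : ℂ)) * (h : ℂ) * ((Real.log (1 / h) : ℝ) : ℂ))) ≤ (Cim + Real.pi / ℓ) * h := by
  have hpih : 0 < Real.pi * h / ℓ := by positivity
  set q : ℝ := z.re * ℓ / (Real.pi * h) with hq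
  have hq0 : 0 < q := by positivity
  refine ⟨⌈q⌉₊, Nat.ceil_pos.2 hq0, ?_⟩
  have hk1 : q ≤ ⌈q⌉₊ := Nat.le_ceil q
  have hk2 : (⌈q⌉₊ : ℝ) < q + 1 := Nat.ceil_lt_add_one hq0.le
  have hz : z.re = Real.pi * h * q / ℓ := by
    rw [hq]; field_simp
  have hre : |z.re - Real.pi * h * ⌈q⌉₊ / ℓ| ≤ Real.pi * h / ℓ := by
    rw [hz, show Real.pi * h * q / ℓ - Real.pi * h * (⌈q⌉₊:ℝ) / ℓ
        = Real.pi * h / ℓ * (q - (⌈q⌉₊:ℝ)) from by ring, abs_mul, abs_of_pos hpih]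
    have habs : |q - (⌈q⌉₊:ℝ)| ≤ 1 := abs_le.2 ⟨by linarith, by linarith⟩
    nlinarith [hpih]
  set p : ℂ := (((Real.pi * h * ⌈q⌉₊ / ℓ : ℝ) : ℂ)
      - Complex.I * ((γ : ℂ)) * (h : ℂ) * ((Real.log (1 / h) : ℝ) : ℂ)) with hp
  have hpre : p.re = Real.pi * h * ⌈q⌉₊ / ℓ := by simp [hp]
  have hpim : p.im = -(γ * h * Real.log (1 / h)) := by simp [hp]
  calc Complex.abs (z - p) ≤ |(z - p).re| + |(z - p).im| := Complex.norm_le_abs_re_add_abs_im _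
    _ ≤ Real.pi * h / ℓ + Cim * h := by
        rw [Complex.sub_re, Complex.sub_im, hpre, hpim]
        have he : z.im - -(γ * h * Real.log (1/h)) = z.im + γ * h * Real.log (1/h) := by ring
        rw [he]
        exact add_le_add hre him
    _ ≤ (Cim + Real.pi / ℓ) * h := le_of_eq (by ring)


lemma cabs_sub_le (x y : ℂ) : Complex.abs (x - y) ≤ Complex.abs x + Complex.abs y := by
  simpa [sub_eq_add_neg, Complex.abs.map_neg] using Complex.abs.add_le x (-y)

lemma cabs_sub_ge (x y : ℂ) : Complex.abs y - Complex.abs x ≤ Complex.abs (x - y) := by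
  have h := Complex.abs.add_le x (y - x)
  have h0 : x + (y - x) = y := by ring
  rw [h0] at h
  have h1 : Complex.abs (y - x) = Complex.abs (x - y) := by
    rw [show y - x = -(x - y) from by ring, Complex.abs.map_neg]
  linarith

lemma cabs_add_ge (x y : ℂ) : Complex.abs x - Complex.abs y ≤ Complex.abs (x + y) := by
  have h := Complex.abs.add_le (x + y) (-y)
  have h0 : x + y + -y = x := by ring
  rw [h0, Complex.abs.map_neg] at h
  linarith

lemma abs_quad_ineqs (aC bC cC w : ℂ) (hEQ : aC + bC * w ^ 2 - cC * w ^ 4 = 0) :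
    Complex.abs aC ≤ Complex.abs bC * Complex.abs w ^ 2
        + Complex.abs cC * (Complex.abs w ^ 2) ^ 2 ∧
    Complex.abs cC * (Complex.abs w ^ 2) ^ 2 ≤ Complex.abs aC + Complex.abs bC * Complex.abs w ^ 2 ∧
    Complex.abs bC * Complex.abs w ^ 2 ≤ Complex.abs aC + Complex.abs cC * (Complex.abs w ^ 2) ^ 2 := by
  have k1 : Complex.abs (bC * w ^ 2) = Complex.abs bC * Complex.abs w ^ 2 := by
    rw [map_mul, map_pow]
  have k2 : Complex.abs (cC * w ^ 4) = Complex.abs cC * (Complex.abs w ^ 2) ^ 2 := by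
    rw [map_mul, map_pow]; ring
  refine ⟨?_, ?_, ?_⟩
  · have e : aC = cC * w ^ 4 - bC * w ^ 2 := by linear_combination hEQ
    rw [e]
    refine (cabs_sub_le _ _).trans (le_of_eq ?_)
    rw [k1, k2]; ring
  · have e : cC * w ^ 4 = aC + bC * w ^ 2 := by linear_combination -hEQ
    rw [← k2, e]
    exact (Complex.abs.add_le _ _).trans (by rw [k1])
  · have e : bC * w ^ 2 = cC * w ^ 4 - aC := by linear_combination hEQ
    rw [← k1, e]
    refine (cabs_sub_le _ _).trans (le_of_eq ?_)
    rw [k2]; ring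

set_option maxHeartbeats 1600000

/-- Theorem (three equally spaced deltas): there exist positive numbers `γ₊, γ₋`
depending only on `ℓ, β₁, β₂, β₃` (possibly equal) such that all resonances with
`1/2 ≤ |z| ≤ 2` and `Re z > 0` lie within `O(h)` of `πhk/ℓ - iγ± h log(1/h)` for
some positive integer `k`. -/
theorem three_equal_delta_resonance_asymptotics
    (ℓ β₁ β₂ β₃ : ℝ) (hℓ : 0 < ℓ) (hβ₁ : 0 < β₁) (hβ₂ : 0 < β₂) (hβ₃ : 0 < β₃) :
    ∃ γp γm : ℝ, 0 < γp ∧ 0 < γm ∧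
      ∀ x₁ C₁ C₂ C₃ : ℝ, C₁ ≠ 0 → C₂ ≠ 0 → C₃ ≠ 0 →
        ∃ C > (0 : ℝ), ∃ h₀ > (0 : ℝ), ∀ h : ℝ, 0 < h → h < h₀ →
          ∀ z : ℂ,
            IsResonance 3 h ![x₁, x₁ + ℓ, x₁ + 2 * ℓ]
              ![C₁ * h ^ (1 + β₁), C₂ * h ^ (1 + β₂), C₃ * h ^ (1 + β₃)] z →
            1 / 2 ≤ ‖z‖ → ‖z‖ ≤ 2 → 0 < z.re →
            ∃ k : ℕ, 0 < k ∧
              (‖z - (((Real.pi * h * k / ℓ : ℝ) : ℂ)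
                  - Complex.I * ((γp : ℂ)) * (h : ℂ) * ((Real.log (1 / h) : ℝ) : ℂ))‖ ≤ C * h
               ∨ ‖z - (((Real.pi * h * k / ℓ : ℝ) : ℂ)
                  - Complex.I * ((γm : ℂ)) * (h : ℂ) * ((Real.log (1 / h) : ℝ) : ℂ))‖ ≤ C * h) := by
  have hm13 : 0 < min β₁ β₃ := lt_min hβ₁ hβ₃
  have hS : 0 < (β₁ + β₃) / 2 := by linarith
  have hs₁ : 0 < β₂ + min β₁ β₃ := by linarith
  refine ⟨min (β₂ + min β₁ β₃) ((β₁ + β₃) / 2) / (2 * ℓ),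
    max (max β₁ β₃ - β₂) ((β₁ + β₃) / 2) / (2 * ℓ),
    div_pos (lt_min hs₁ hS) (by linarith),
    div_pos (lt_of_lt_of_le hS (le_max_right _ _)) (by linarith), ?_⟩
  intro x₁ C₁ C₂ C₃ hC₁ hC₂ hC₃
  set P₁ : ℝ := |C₁| with hP₁def
  set P₂ : ℝ := |C₂| with hP₂def
  set P₃ : ℝ := |C₃| with hP₃def
  have hP₁ : 0 < P₁ := abs_pos.2 hC₁
  have hP₂ : 0 < P₂ := abs_pos.2 hC₂
  have hP₃ : 0 < P₃ := abs_pos.2 hC₃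
  set KB : ℝ := 2 * P₁ * P₂ * P₃ + 4 * P₂ * (P₁ + P₃) with hKBdef
  have hKB : 0 < KB := by positivity
  set δ : ℝ := min 1 ((7/10) / (KB + 5 * P₁ * P₃)) with hδdef
  have hδ : 0 < δ := lt_min one_pos (by positivity)
  have hδ1 : δ ≤ 1 := min_le_left _ _
  have hδ2 : δ ≤ (7/10) / (KB + 5 * P₁ * P₃) := min_le_right _ _
  set U : ℝ := (10/9) * (128 + KB) / (P₁ * P₃ * δ) with hUdef
  have hU : 0 < U := by positivity
  set cb : ℝ := P₂ * min P₁ P₃ / 4 with hcbdef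
  have hminP : 0 < min P₁ P₃ := lt_min hP₁ hP₃
  have hcb : 0 < cb := by positivity
  set κ : ℝ := cb / (10 * P₁ * P₃) with hκdef
  have hκ : 0 < κ := by positivity
  set MB : ℝ := 256 / cb with hMBdef
  have hMB : 0 < MB := by positivity
  -- the final imaginary-part constant (covers all branches)
  set Rim : ℝ := ((|Real.log δ| + |Real.log MB|) / (2 * ℓ))
      + ((|Real.log κ| + |Real.log U|) / (2 * ℓ))
      + ((|Real.log δ| + |Real.log U|) / (2 * ℓ)) with hRimdef
  have hRim : 0 ≤ Rim := by positivity
  refine ⟨Rim + Real.pi / ℓ, by positivity, ?_⟩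
  -- smallness requirements on h
  obtain ⟨a₁, ha₁, H₁⟩ := small_rpow P₁ (1/10) β₁ hβ₁ (by norm_num)
  obtain ⟨a₂, ha₂, H₂⟩ := small_rpow P₂ (1/10) β₂ hβ₂ (by norm_num)
  obtain ⟨a₃, ha₃, H₃⟩ := small_rpow P₃ (1/10) β₃ hβ₃ (by norm_num)
  obtain ⟨a₄, ha₄, H₄⟩ : ∃ a₄ > (0:ℝ), ∀ h : ℝ, 0 < h → h < a₄ →
      (β₂ + min β₁ β₃ < (β₁ + β₃)/2 →
        ((P₁ + P₃) * h ^ (max β₁ β₃ - min β₁ β₃) ≤ min P₁ P₃ / 2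
          ∧ 2 * P₁ * P₃ * h ^ (max β₁ β₃) ≤ min P₁ P₃ / 4)) := by
    rcases lt_or_ge (β₂ + min β₁ β₃) ((β₁ + β₃)/2) with hc | hc
    · have hgap : 0 < max β₁ β₃ - min β₁ β₃ := by
        rcases le_total β₁ β₃ with hb | hb
        · rw [min_eq_left hb, max_eq_right hb]
          rw [min_eq_left hb] at hc; cases' (max_cases β₁ β₃) with hmm hmm <;> nlinarith
        · rw [min_eq_right hb, max_eq_left hb]
          rw [min_eq_right hb] at hc; nlinarith
      obtain ⟨b₄, hb₄, G₄⟩ := small_rpow (P₁ + P₃) (min P₁ P₃ / 2) _ hgap (by positivity)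
      obtain ⟨b₅, hb₅, G₅⟩ := small_rpow (2 * P₁ * P₃) (min P₁ P₃ / 4)
        (max β₁ β₃) (lt_of_lt_of_le hβ₁ (le_max_left _ _)) (by positivity)
      exact ⟨min b₄ b₅, lt_min hb₄ hb₅, fun h hh hlt _ =>
        ⟨G₄ h hh (hlt.trans_le (min_le_left _ _)), G₅ h hh (hlt.trans_le (min_le_right _ _))⟩⟩
    · exact ⟨1, one_pos, fun h hh hlt hcon => absurd hcon (not_lt.2 hc)⟩
  refine ⟨min (min a₁ a₂) (min a₃ (min a₄ (1/2))), by positivity, ?_⟩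
  intro h hh hhlt z hres habs1 habs2 hzre
  change 1 / 2 ≤ Complex.abs z at habs1
  change Complex.abs z ≤ 2 at habs2
  have hha₁ : h < a₁ := lt_of_lt_of_le hhlt ((min_le_left _ _).trans (min_le_left _ _))
  have hha₂ : h < a₂ := lt_of_lt_of_le hhlt ((min_le_left _ _).trans (min_le_right _ _))
  have hha₃ : h < a₃ := lt_of_lt_of_le hhlt ((min_le_right _ _).trans (min_le_left _ _))
  have hha₄ : h < a₄ := lt_of_lt_of_le hhlt
    ((min_le_right _ _).trans ((min_le_right _ _).trans (min_le_left _ _)))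
  have hh1 : h < 1 := by
    have : h < 1/2 := lt_of_lt_of_le hhlt
      ((min_le_right _ _).trans ((min_le_right _ _).trans (min_le_right _ _)))
    linarith
  have sm₁ : P₁ * h ^ β₁ ≤ 1/10 := by have := H₁ h hh hha₁; linarith
  have sm₂ : P₂ * h ^ β₂ ≤ 1/10 := by have := H₂ h hh hha₂; linarith
  have sm₃ : P₃ * h ^ β₃ ≤ 1/10 := by have := H₃ h hh hha₃; linarith
  -- basic nonvanishing
  have hhc : (h:ℂ) ≠ 0 := Complex.ofReal_ne_zero.2 hh.ne'
  have hz0 : z ≠ 0 := by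
    intro hzz; rw [hzz] at habs1; simp at habs1; linarith
  obtain ⟨u₁, u₂, u₃, hu, S1, S2, S3⟩ :=
    resonance_system h ℓ x₁ (C₁ * h ^ (1 + β₁)) (C₂ * h ^ (1 + β₂)) (C₃ * h ^ (1 + β₃))
      z hhc hz0 hres
  set w : ℂ := Complex.exp (Complex.I * ℓ * z / h) with hwdef
  set μ : ℂ := 2 * Complex.I * h * z with hμdef
  set V₁c : ℂ := ((C₁ * h ^ (1 + β₁) : ℝ) : ℂ) with hV1def
  set V₂c : ℂ := ((C₂ * h ^ (1 + β₂) : ℝ) : ℂ) with hV2def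
  set V₃c : ℂ := ((C₃ * h ^ (1 + β₃) : ℝ) : ℂ) with hV3def
  have EQ := det_vanish μ V₁c V₂c V₃c w u₁ u₂ u₃ S1 S2 S3 hu
  -- real magnitudes
  set g₁ : ℝ := h ^ β₁ with hg1def
  set g₂ : ℝ := h ^ β₂ with hg2def
  set g₃ : ℝ := h ^ β₃ with hg3def
  have hg₁ : 0 < g₁ := Real.rpow_pos_of_pos hh _
  have hg₂ : 0 < g₂ := Real.rpow_pos_of_pos hh _
  have hg₃ : 0 < g₃ := Real.rpow_pos_of_pos hh _
  have hg₁1 : g₁ ≤ 1 := Real.rpow_le_one hh.le hh1.le hβ₁.le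
  have hg₂1 : g₂ ≤ 1 := Real.rpow_le_one hh.le hh1.le hβ₂.le
  have hg₃1 : g₃ ≤ 1 := Real.rpow_le_one hh.le hh1.le hβ₃.le
  set gm : ℝ := max g₁ g₃ with hgmdef
  have hgm : 0 < gm := lt_of_lt_of_le hg₁ (le_max_left _ _)
  have hg1m : g₁ ≤ gm := le_max_left _ _
  have hg3m : g₃ ≤ gm := le_max_right _ _
  have hg13 : g₁ * g₃ ≤ gm := by
    rcases le_total g₁ g₃ with hgg | hgg
    · rw [hgmdef, max_eq_right hgg]; exact mul_le_of_le_one_left hg₃.le hg₁1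
    · rw [hgmdef, max_eq_left hgg]; exact mul_le_of_le_one_right hg₁.le hg₃1
  have habsV1 : Complex.abs V₁c = P₁ * (h * g₁) := by
    rw [hV1def, Complex.abs_ofReal, abs_mul, hg1def,
      abs_of_pos (Real.rpow_pos_of_pos hh _), Real.rpow_add hh, Real.rpow_one, hP₁def]
  have habsV2 : Complex.abs V₂c = P₂ * (h * g₂) := by
    rw [hV2def, Complex.abs_ofReal, abs_mul, hg2def,
      abs_of_pos (Real.rpow_pos_of_pos hh _), Real.rpow_add hh, Real.rpow_one, hP₂def]
  have habsV3 : Complex.abs V₃c = P₃ * (h * g₃) := by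
    rw [hV3def, Complex.abs_ofReal, abs_mul, hg3def,
      abs_of_pos (Real.rpow_pos_of_pos hh _), Real.rpow_add hh, Real.rpow_one, hP₃def]
  have habsμ : Complex.abs μ = 2 * h * Complex.abs z := by
    rw [hμdef]
    simp [map_mul, Complex.abs_ofReal, abs_of_pos hh, Complex.abs_two, Complex.abs_I]
  have habsμl : h ≤ Complex.abs μ := by
    rw [habsμ]
    have := mul_le_mul_of_nonneg_left habs1 (by positivity : (0:ℝ) ≤ 2*h)
    linarith
  have habsμu : Complex.abs μ ≤ 4 * h := by
    rw [habsμ]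
    have := mul_le_mul_of_nonneg_left habs2 (by positivity : (0:ℝ) ≤ 2*h)
    linarith
  -- size of the V's
  have hV1s : Complex.abs V₁c ≤ h / 10 := by
    rw [habsV1]
    calc P₁ * (h * g₁) = h * (P₁ * g₁) := by ring
      _ ≤ h * (1/10) := mul_le_mul_of_nonneg_left sm₁ hh.le
      _ = h / 10 := by ring
  have hV2s : Complex.abs V₂c ≤ h / 10 := by
    rw [habsV2]
    calc P₂ * (h * g₂) = h * (P₂ * g₂) := by ring
      _ ≤ h * (1/10) := mul_le_mul_of_nonneg_left sm₂ hh.le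
      _ = h / 10 := by ring
  have hV3s : Complex.abs V₃c ≤ h / 10 := by
    rw [habsV3]
    calc P₃ * (h * g₃) = h * (P₃ * g₃) := by ring
      _ ≤ h * (1/10) := mul_le_mul_of_nonneg_left sm₃ hh.le
      _ = h / 10 := by ring
  -- bounds for |μ - Vⱼ|
  have hd1l : (9/10) * h ≤ Complex.abs (μ - V₁c) := by
    have tri := Complex.abs.add_le (μ - V₁c) V₁c
    rw [show μ - V₁c + V₁c = μ from by ring] at tri
    linarith only [tri, habsμl, hV1s]
  have hd2l : (9/10) * h ≤ Complex.abs (μ - V₂c) := by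
    have tri := Complex.abs.add_le (μ - V₂c) V₂c
    rw [show μ - V₂c + V₂c = μ from by ring] at tri
    linarith only [tri, habsμl, hV2s]
  have hd3l : (9/10) * h ≤ Complex.abs (μ - V₃c) := by
    have tri := Complex.abs.add_le (μ - V₃c) V₃c
    rw [show μ - V₃c + V₃c = μ from by ring] at tri
    linarith only [tri, habsμl, hV3s]
  have hd1u : Complex.abs (μ - V₁c) ≤ (41/10) * h := by
    have tri := cabs_sub_le μ V₁c
    linarith only [tri, habsμu, hV1s]
  have hd2u : Complex.abs (μ - V₂c) ≤ (41/10) * h := by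
    have tri := cabs_sub_le μ V₂c
    linarith only [tri, habsμu, hV2s]
  have hd3u : Complex.abs (μ - V₃c) ≤ (41/10) * h := by
    have tri := cabs_sub_le μ V₃c
    linarith only [tri, habsμu, hV3s]
  -- coefficient setup
  set aC : ℂ := (μ - V₁c) * (μ - V₂c) * (μ - V₃c) with haCdef
  set bC : ℂ := 2 * V₁c * V₂c * V₃c - μ * V₂c * (V₁c + V₃c) with hbCdef
  set cC : ℂ := V₁c * V₃c * (μ + V₂c) with hcCdef
  obtain ⟨ineq1, ineq2, ineq3⟩ := abs_quad_ineqs aC bC cC w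
    (by rw [hcCdef]; linear_combination EQ)
  set X : ℝ := Complex.abs w ^ 2 with hXdef
  have hX0 : 0 < X := by
    rw [hXdef]
    exact pow_pos (Complex.abs.pos (by rw [hwdef]; exact Complex.exp_ne_zero _)) 2
  have hwarg : Complex.I * (ℓ:ℂ) * z / (h:ℂ) = (((ℓ / h : ℝ)):ℂ) * (Complex.I * z) := by
    push_cast
    field_simp
  have habsw : Complex.abs w = Real.exp ((ℓ / h) * (-z.im)) := by
    rw [hwdef, hwarg, Complex.abs_exp]
    congr 1
    rw [Complex.re_ofReal_mul]
    simp [Complex.mul_re]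
  have hXexp : X = Real.exp (-(2*ℓ*z.im)/h) := by
    rw [hXdef, habsw, sq, ← Real.exp_add]
    congr 1
    field_simp
    ring
  -- |aC| bounds
  have haCabs : Complex.abs aC = Complex.abs (μ - V₁c) * Complex.abs (μ - V₂c)
      * Complex.abs (μ - V₃c) := by
    rw [haCdef, map_mul, map_mul]
  have haCl : (7/10) * (h*h*h) ≤ Complex.abs aC := by
    rw [haCabs]
    nlinarith only [hd1l, hd2l, hd3l, hh,
      mul_le_mul hd1l hd2l (by positivity) (AbsoluteValue.nonneg _ _)]
  have haCu : Complex.abs aC ≤ 128 * (h*h*h) := by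
    rw [haCabs]
    nlinarith only [hd1u, hd2u, hd3u, hd1l, hd2l, hd3l, hh,
      mul_le_mul hd1u hd2u (by linarith only [hd2l, hh]) (by positivity)]
  -- |bC| upper bound
  have hbCu : Complex.abs bC ≤ KB * (h*h*h) * (g₂ * gm) := by
    have t1 : Complex.abs bC ≤ Complex.abs (2 * V₁c * V₂c * V₃c)
        + Complex.abs (μ * V₂c * (V₁c + V₃c)) := by
      rw [hbCdef]; exact cabs_sub_le _ _
    have t2 : Complex.abs (2 * V₁c * V₂c * V₃c)
        = 2 * (P₁*(h*g₁)) * (P₂*(h*g₂)) * (P₃*(h*g₃)) := by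
      rw [map_mul, map_mul, map_mul, habsV1, habsV2, habsV3, Complex.abs_two]
    have hsum : Complex.abs (V₁c + V₃c) ≤ P₁*(h*g₁) + P₃*(h*g₃) := by
      rw [← habsV1, ← habsV3]; exact Complex.abs.add_le _ _
    have t3 : Complex.abs (μ * V₂c * (V₁c + V₃c))
        ≤ (4*h) * (P₂*(h*g₂)) * (P₁*(h*g₁) + P₃*(h*g₃)) := by
      rw [map_mul, map_mul]
      refine mul_le_mul (mul_le_mul habsμu (le_of_eq habsV2)
        (AbsoluteValue.nonneg _ _) (by positivity)) hsum (AbsoluteValue.nonneg _ _)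
        (by positivity)
    have m1 : 2*(P₁*(h*g₁))*(P₂*(h*g₂))*(P₃*(h*g₃)) ≤ 2*P₁*P₂*P₃*(h*h*h)*(g₂*gm) := by
      nlinarith only [mul_le_mul_of_nonneg_left hg13
        (by positivity : (0:ℝ) ≤ 2*P₁*P₂*P₃*(h*h*h)*g₂)]
    have m2 : (4*h)*(P₂*(h*g₂))*(P₁*(h*g₁) + P₃*(h*g₃)) ≤ 4*P₂*(P₁+P₃)*(h*h*h)*(g₂*gm) := by
      nlinarith only [mul_le_mul_of_nonneg_left hg1m
          (by positivity : (0:ℝ) ≤ 4*P₂*P₁*(h*h*h)*g₂),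
        mul_le_mul_of_nonneg_left hg3m
          (by positivity : (0:ℝ) ≤ 4*P₂*P₃*(h*h*h)*g₂)]
    rw [hKBdef]
    linarith only [t1, t3, m1, m2, t2.le, t2.ge]
  -- |cC| bounds
  have hmuV2l : (9/10)*h ≤ Complex.abs (μ + V₂c) := by
    have t := cabs_add_ge μ V₂c
    linarith only [t, habsμl, hV2s, hh]
  have hmuV2u : Complex.abs (μ + V₂c) ≤ 5*h := by
    have t := Complex.abs.add_le μ V₂c
    linarith only [t, habsμu, hV2s, hh]
  have hcCabs : Complex.abs cC = (P₁*(h*g₁)) * (P₃*(h*g₃)) * Complex.abs (μ + V₂c) := by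
    rw [hcCdef, map_mul, map_mul, habsV1, habsV3]
  have hcCl : (9/10)*(P₁*P₃)*(h*h*h)*(g₁*g₃) ≤ Complex.abs cC := by
    rw [hcCabs]
    nlinarith only [mul_le_mul_of_nonneg_left hmuV2l
      (by positivity : (0:ℝ) ≤ (P₁*(h*g₁))*(P₃*(h*g₃)))]
  have hcCu : Complex.abs cC ≤ 5*(P₁*P₃)*(h*h*h)*(g₁*g₃) := by
    rw [hcCabs]
    nlinarith only [mul_le_mul_of_nonneg_left hmuV2u
      (by positivity : (0:ℝ) ≤ (P₁*(h*g₁))*(P₃*(h*g₃)))]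
  -- shared exponent identities
  have hminmax : min β₁ β₃ + max β₁ β₃ = β₁ + β₃ := min_add_max _ _
  have hp0 : (0:ℝ) < h ^ (β₂ + min β₁ β₃) := Real.rpow_pos_of_pos hh _
  have hpg : h ^ (β₂ + min β₁ β₃) = g₂ * gm := by
    rcases le_total β₁ β₃ with hb | hb
    · have hq : gm = g₁ := max_eq_left (Real.rpow_le_rpow_of_exponent_ge hh hh1.le hb)
      rw [min_eq_left hb, Real.rpow_add hh, hq]
    · have hq : gm = g₃ := max_eq_right (Real.rpow_le_rpow_of_exponent_ge hh hh1.le hb)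
      rw [min_eq_right hb, Real.rpow_add hh, hq]
  have hhh : (0:ℝ) < h*h*h := by positivity
  have hδprod : δ * (KB + 5*(P₁*P₃)) ≤ 7/10 := by
    calc δ * (KB + 5*(P₁*P₃)) ≤ ((7/10) / (KB + 5 * P₁ * P₃)) * (KB + 5*(P₁*P₃)) :=
          mul_le_mul_of_nonneg_right hδ2 (by positivity)
      _ = 7/10 := by field_simp
  have hUeq : U * (P₁*P₃*δ) = (10/9)*(128 + KB) := by
    rw [hUdef]; field_simp
  have hκeq : κ * (10*(P₁*P₃)) = cb := by
    rw [hκdef]; field_simp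
  have hMBeq : MB * cb = 256 := by
    rw [hMBdef]; field_simp
  clear_value P₁ P₂ P₃ KB δ U cb κ MB Rim g₁ g₂ g₃ gm X w μ V₁c V₂c V₃c aC bC cC
  rcases lt_or_ge (β₂ + min β₁ β₃) ((β₁ + β₃)/2) with hcase | hcase
  · -- CASE 1: two separated strings
    obtain ⟨sc4, sc5⟩ := H₄ h hh hha₄ hcase
    set p : ℝ := h ^ (β₂ + min β₁ β₃) with hpdef
    set τ : ℝ := h ^ (max β₁ β₃ - β₂) with hτdef
    have hτ0 : 0 < τ := Real.rpow_pos_of_pos hh _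
    have hpτ : p * τ = g₁ * g₃ := by
      rw [hpdef, hτdef, ← Real.rpow_add hh,
        show β₂ + min β₁ β₃ + (max β₁ β₃ - β₂) = β₁ + β₃ from by linarith only [hminmax],
        Real.rpow_add hh, ← hg1def, ← hg3def]
    have hτlep : τ ≤ p := by
      rw [hpdef, hτdef]
      exact Real.rpow_le_rpow_of_exponent_ge hh hh1.le (by linarith only [hminmax, hcase])
    set Y : ℝ := p * X with hYdef
    set Z : ℝ := τ * X with hZdef
    have hY0 : 0 < Y := mul_pos hp0 hX0
    have hZ0 : 0 < Z := mul_pos hτ0 hX0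
    have hZY : Z ≤ Y := mul_le_mul_of_nonneg_right hτlep hX0.le
    clear_value p τ Y Z
    -- lower bound for |bC| in case 1
    have hV13l : ((min P₁ P₃) / 2) * (h * gm) ≤ Complex.abs (V₁c + V₃c) := by
      have htri := cabs_add_ge V₁c V₃c
      rw [habsV1, habsV3] at htri
      rcases le_total β₁ β₃ with hb | hb
      · have hgm1 : gm = g₁ := by
          rw [hgmdef, hg1def, hg3def]
          exact max_eq_left (Real.rpow_le_rpow_of_exponent_ge hh hh1.le hb)
        have hsplit : g₃ = g₁ * h ^ (max β₁ β₃ - min β₁ β₃) := by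
          rw [hg3def, hg1def, ← Real.rpow_add hh, min_eq_left hb, max_eq_right hb]
          congr 1
          ring
        have hP3g : P₃ * g₃ ≤ ((min P₁ P₃)/2) * g₁ := by
          rw [hsplit]
          have hP3le : P₃ ≤ P₁ + P₃ := by linarith only [hP₁]
          have h4 : P₃ * h ^ (max β₁ β₃ - min β₁ β₃) ≤ (min P₁ P₃)/2 := by
            nlinarith only [sc4, Real.rpow_pos_of_pos hh (max β₁ β₃ - min β₁ β₃), hP3le]
          nlinarith only [h4, hg₁, Real.rpow_pos_of_pos hh (max β₁ β₃ - min β₁ β₃)]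
        rw [hgm1]
        have hP1m : min P₁ P₃ ≤ P₁ := min_le_left _ _
        nlinarith only [htri, hP3g, hh, hg₁, mul_le_mul_of_nonneg_left hP3g hh.le,
          mul_le_mul_of_nonneg_right hP1m (by positivity : (0:ℝ) ≤ h * g₁)]
      · have hgm1 : gm = g₃ := by
          rw [hgmdef, hg1def, hg3def]
          exact max_eq_right (Real.rpow_le_rpow_of_exponent_ge hh hh1.le hb)
        have hsplit : g₁ = g₃ * h ^ (max β₁ β₃ - min β₁ β₃) := by
          rw [hg1def, hg3def, ← Real.rpow_add hh, min_eq_right hb, max_eq_left hb]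
          congr 1
          ring
        have hP1g : P₁ * g₁ ≤ ((min P₁ P₃)/2) * g₃ := by
          rw [hsplit]
          have hP1le : P₁ ≤ P₁ + P₃ := by linarith only [hP₃]
          have h4 : P₁ * h ^ (max β₁ β₃ - min β₁ β₃) ≤ (min P₁ P₃)/2 := by
            nlinarith only [sc4, Real.rpow_pos_of_pos hh (max β₁ β₃ - min β₁ β₃), hP1le]
          nlinarith only [h4, hg₃, Real.rpow_pos_of_pos hh (max β₁ β₃ - min β₁ β₃)]
        rw [hgm1]
        have hP3m : min P₁ P₃ ≤ P₃ := min_le_right _ _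
        have htri2 := cabs_add_ge V₃c V₁c
        rw [habsV1, habsV3, show V₃c + V₁c = V₁c + V₃c from by ring] at htri2
        nlinarith only [htri2, hP1g, hh, hg₃, mul_le_mul_of_nonneg_left hP1g hh.le,
          mul_le_mul_of_nonneg_right hP3m (by positivity : (0:ℝ) ≤ h * g₃)]
    have hbCl : cb*(h*h*h)*(g₂*gm) ≤ Complex.abs bC := by
      have htri := cabs_sub_ge (2*V₁c*V₂c*V₃c) (μ*V₂c*(V₁c+V₃c))
      have hQ : Complex.abs (2*V₁c*V₂c*V₃c) = 2*(P₁*(h*g₁))*(P₂*(h*g₂))*(P₃*(h*g₃)) := by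
        rw [map_mul, map_mul, map_mul, habsV1, habsV2, habsV3, Complex.abs_two]
      have hT : h * (P₂*(h*g₂)) * (((min P₁ P₃)/2)*(h*gm)) ≤ Complex.abs (μ*V₂c*(V₁c+V₃c)) := by
        rw [map_mul, map_mul, habsV2]
        refine mul_le_mul ?_ hV13l (by positivity) (by positivity)
        exact mul_le_mul habsμl (le_refl _) (by positivity) (AbsoluteValue.nonneg _ _)
      have hsm : 2*(P₁*(h*g₁))*(P₂*(h*g₂))*(P₃*(h*g₃)) ≤ ((min P₁ P₃)/4)*P₂*(h*h*h)*(g₂*gm) := by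
        rcases le_total β₁ β₃ with hb | hb
        · have hgm1 : gm = g₁ := by
            rw [hgmdef, hg1def, hg3def]
            exact max_eq_left (Real.rpow_le_rpow_of_exponent_ge hh hh1.le hb)
          have hg3M : g₃ = h ^ (max β₁ β₃) := by rw [hg3def, max_eq_right hb]
          have h5 : 2*P₁*P₃*g₃ ≤ (min P₁ P₃)/4 := by rw [hg3M]; exact sc5
          rw [hgm1]
          nlinarith only [mul_le_mul_of_nonneg_left h5
            (by positivity : (0:ℝ) ≤ P₂*(h*h*h)*(g₂*g₁))]
        · have hgm1 : gm = g₃ := by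
            rw [hgmdef, hg1def, hg3def]
            exact max_eq_right (Real.rpow_le_rpow_of_exponent_ge hh hh1.le hb)
          have hg1M : g₁ = h ^ (max β₁ β₃) := by rw [hg1def, max_eq_left hb]
          have h5 : 2*P₁*P₃*g₁ ≤ (min P₁ P₃)/4 := by rw [hg1M]; exact sc5
          rw [hgm1]
          nlinarith only [mul_le_mul_of_nonneg_left h5
            (by positivity : (0:ℝ) ≤ P₂*(h*h*h)*(g₂*g₃))]
      rw [hbCdef, hcbdef]
      linarith only [htri, hQ.le, hQ.ge, hT, hsm]
    -- master inequalities, divided by h³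
    have hbX : Complex.abs bC * X ≤ KB*(h*h*h)*Y := by
      calc Complex.abs bC * X ≤ (KB*(h*h*h)*(g₂*gm)) * X :=
            mul_le_mul_of_nonneg_right hbCu hX0.le
        _ = KB*(h*h*h)*Y := by rw [hYdef, ← hpg]; ring
    have hbXl : cb*(h*h*h)*Y ≤ Complex.abs bC * X := by
      calc cb*(h*h*h)*Y = (cb*(h*h*h)*(g₂*gm)) * X := by rw [hYdef, ← hpg]; ring
        _ ≤ Complex.abs bC * X := mul_le_mul_of_nonneg_right hbCl hX0.le
    have hcX : Complex.abs cC * X^2 ≤ 5*(P₁*P₃)*(h*h*h)*(Y*Z) := by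
      calc Complex.abs cC * X^2 ≤ (5*(P₁*P₃)*(h*h*h)*(g₁*g₃)) * X^2 :=
            mul_le_mul_of_nonneg_right hcCu (by positivity)
        _ = 5*(P₁*P₃)*(h*h*h)*(Y*Z) := by rw [hYdef, hZdef, ← hpτ]; ring
    have hcXl : (9/10)*(P₁*P₃)*(h*h*h)*(Y*Z) ≤ Complex.abs cC * X^2 := by
      calc (9/10)*(P₁*P₃)*(h*h*h)*(Y*Z) = ((9/10)*(P₁*P₃)*(h*h*h)*(g₁*g₃))*X^2 := by
            rw [hYdef, hZdef, ← hpτ]; ring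
        _ ≤ Complex.abs cC * X^2 := mul_le_mul_of_nonneg_right hcCl (by positivity)
    have f1 : 7/10 ≤ KB*Y + 5*(P₁*P₃)*(Y*Z) := by
      have chain : (7/10)*(h*h*h) ≤ KB*(h*h*h)*Y + 5*(P₁*P₃)*(h*h*h)*(Y*Z) :=
        haCl.trans (ineq1.trans (add_le_add hbX hcX))
      nlinarith only [chain, hhh]
    have f2 : (9/10)*(P₁*P₃)*(Y*Z) ≤ 128 + KB*Y := by
      have chain : (9/10)*(P₁*P₃)*(h*h*h)*(Y*Z) ≤ 128*(h*h*h) + KB*(h*h*h)*Y :=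
        hcXl.trans (ineq2.trans (add_le_add haCu hbX))
      nlinarith only [chain, hhh]
    have f3 : cb*Y ≤ 128 + 5*(P₁*P₃)*(Y*Z) := by
      have chain : cb*(h*h*h)*Y ≤ 128*(h*h*h) + 5*(P₁*P₃)*(h*h*h)*(Y*Z) :=
        hbXl.trans (ineq3.trans (add_le_add haCu hcX))
      nlinarith only [chain, hhh]
    have hYl : δ ≤ Y := by
      by_contra hcon
      push_neg at hcon
      have hY1 : Y ≤ 1 := le_trans hcon.le hδ1
      have hYY : Y*Y ≤ Y := by nlinarith only [hY0, hY1]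
      have ha1 : 5*(P₁*P₃)*(Y*Z) ≤ 5*(P₁*P₃)*(Y*Y) :=
        mul_le_mul_of_nonneg_left (mul_le_mul_of_nonneg_left hZY hY0.le) (by positivity)
      have ha2 : 5*(P₁*P₃)*(Y*Y) ≤ 5*(P₁*P₃)*Y := mul_le_mul_of_nonneg_left hYY (by positivity)
      have hc2 : (KB + 5*(P₁*P₃))*Y < (KB + 5*(P₁*P₃))*δ :=
        mul_lt_mul_of_pos_left hcon (by positivity)
      linarith only [f1, ha1, ha2, hc2, hδprod]
    have hUeqY : (9/10)*(P₁*P₃)*δ*U*Y = (128 + KB)*Y := by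
      linear_combination ((9/10)*Y) * hUeq
    have hZU : Z ≤ U := by
      by_contra hcon
      push_neg at hcon
      have hm := mul_lt_mul_of_pos_left hcon (by positivity : (0:ℝ) < (9/10)*(P₁*P₃)*δ*Y)
      have f2δ : δ*((9/10)*(P₁*P₃)*(Y*Z)) ≤ δ*(128 + KB*Y) := mul_le_mul_of_nonneg_left f2 hδ.le
      have h128 : 128*δ ≤ 128*Y := by linarith only [hYl]
      have hKBd : KB*(Y*δ) ≤ KB*Y := by
        nlinarith only [mul_nonneg (mul_nonneg hKB.le hY0.le) (sub_nonneg.2 hδ1)]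
      nlinarith only [hm, f2δ, h128, hKBd, hUeqY]
    have hdi : Y ≤ MB ∨ κ ≤ Z := by
      by_contra hcon
      push_neg at hcon
      obtain ⟨hcon1, hcon2⟩ := hcon
      have hm := mul_lt_mul_of_pos_left hcon2 (by positivity : (0:ℝ) < 5*(P₁*P₃)*Y)
      have hmk : 5*(P₁*P₃)*Y*κ = (cb*Y)/2 := by
        linear_combination (Y/2) * hκeq
      have hm2 := mul_lt_mul_of_pos_left hcon1 hcb
      nlinarith only [f3, hm, hmk, hm2, hMBeq]
    rcases hdi with hbr | hbr
    · have h1' : δ ≤ h ^ (β₂ + min β₁ β₃) * Real.exp (-(2*ℓ*z.im)/h) := by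
        rw [← hXexp, ← hpdef, ← hYdef]
        exact hYl
      have h2' : h ^ (β₂ + min β₁ β₃) * Real.exp (-(2*ℓ*z.im)/h) ≤ MB := by
        rw [← hXexp, ← hpdef, ← hYdef]
        exact hbr
      have him := log_pinch ℓ h (β₂ + min β₁ β₃) δ MB z hℓ hh hδ h1' h2'
      have hRb : (|Real.log δ| + |Real.log MB|)/(2*ℓ) ≤ Rim := by
        have q1 : 0 ≤ (|Real.log κ| + |Real.log U|)/(2*ℓ) := by positivity
        have q2 : 0 ≤ (|Real.log δ| + |Real.log U|)/(2*ℓ) := by positivity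
        rw [hRimdef]
        linarith only [q1, q2]
      have him' : |z.im + ((β₂ + min β₁ β₃)/(2*ℓ))*h*Real.log (1/h)| ≤ Rim*h :=
        him.trans (mul_le_mul_of_nonneg_right hRb hh.le)
      obtain ⟨k, hk, hbound⟩ := assemble ℓ h Rim ((β₂ + min β₁ β₃)/(2*ℓ)) z hℓ hh hzre him'
      refine ⟨k, hk, Or.inl ?_⟩
      rw [show min (β₂ + min β₁ β₃) ((β₁+β₃)/2) = β₂ + min β₁ β₃ from min_eq_left hcase.le]
      exact hbound
    · have hmax : max (max β₁ β₃ - β₂) ((β₁+β₃)/2) = max β₁ β₃ - β₂ :=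
        max_eq_left (by linarith only [hminmax, hcase])
      have h1' : κ ≤ h ^ (max β₁ β₃ - β₂) * Real.exp (-(2*ℓ*z.im)/h) := by
        rw [← hXexp, ← hτdef, ← hZdef]
        exact hbr
      have h2' : h ^ (max β₁ β₃ - β₂) * Real.exp (-(2*ℓ*z.im)/h) ≤ U := by
        rw [← hXexp, ← hτdef, ← hZdef]
        exact hZU
      have him := log_pinch ℓ h (max β₁ β₃ - β₂) κ U z hℓ hh hκ h1' h2'
      have hRb : (|Real.log κ| + |Real.log U|)/(2*ℓ) ≤ Rim := by
        have q1 : 0 ≤ (|Real.log δ| + |Real.log MB|)/(2*ℓ) := by positivity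
        have q2 : 0 ≤ (|Real.log δ| + |Real.log U|)/(2*ℓ) := by positivity
        rw [hRimdef]
        linarith only [q1, q2]
      have him' : |z.im + ((max β₁ β₃ - β₂)/(2*ℓ))*h*Real.log (1/h)| ≤ Rim*h :=
        him.trans (mul_le_mul_of_nonneg_right hRb hh.le)
      obtain ⟨k, hk, hbound⟩ := assemble ℓ h Rim ((max β₁ β₃ - β₂)/(2*ℓ)) z hℓ hh hzre him'
      refine ⟨k, hk, Or.inr ?_⟩
      rw [hmax]
      exact hbound
  · -- CASE 2: a single string
    set σ : ℝ := h ^ ((β₁+β₃)/2) with hσdef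
    have hσ0 : 0 < σ := Real.rpow_pos_of_pos hh _
    have hσσ : σ * σ = g₁ * g₃ := by
      rw [hσdef, ← Real.rpow_add hh, show (β₁+β₃)/2 + (β₁+β₃)/2 = β₁+β₃ from by ring,
        Real.rpow_add hh, ← hg1def, ← hg3def]
    have hple : h ^ (β₂ + min β₁ β₃) ≤ σ := by
      rw [hσdef]
      exact Real.rpow_le_rpow_of_exponent_ge hh hh1.le hcase
    set Y : ℝ := σ * X with hYdef
    have hY0 : 0 < Y := mul_pos hσ0 hX0
    clear_value σ Y
    have hbX : Complex.abs bC * X ≤ KB*(h*h*h)*Y := by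
      calc Complex.abs bC * X ≤ (KB*(h*h*h)*(g₂*gm)) * X :=
            mul_le_mul_of_nonneg_right hbCu hX0.le
        _ = (KB*(h*h*h)) * (h ^ (β₂ + min β₁ β₃) * X) := by rw [hpg]; ring
        _ ≤ (KB*(h*h*h)) * (σ * X) := by
            refine mul_le_mul_of_nonneg_left ?_ (by positivity)
            exact mul_le_mul_of_nonneg_right hple hX0.le
        _ = KB*(h*h*h)*Y := by rw [hYdef]
    have hcX : Complex.abs cC * X^2 ≤ 5*(P₁*P₃)*(h*h*h)*(Y*Y) := by
      calc Complex.abs cC * X^2 ≤ (5*(P₁*P₃)*(h*h*h)*(g₁*g₃)) * X^2 :=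
            mul_le_mul_of_nonneg_right hcCu (by positivity)
        _ = 5*(P₁*P₃)*(h*h*h)*(Y*Y) := by rw [hYdef, ← hσσ]; ring
    have hcXl : (9/10)*(P₁*P₃)*(h*h*h)*(Y*Y) ≤ Complex.abs cC * X^2 := by
      calc (9/10)*(P₁*P₃)*(h*h*h)*(Y*Y) = ((9/10)*(P₁*P₃)*(h*h*h)*(g₁*g₃))*X^2 := by
            rw [hYdef, ← hσσ]; ring
        _ ≤ Complex.abs cC * X^2 := mul_le_mul_of_nonneg_right hcCl (by positivity)
    have f1 : 7/10 ≤ KB*Y + 5*(P₁*P₃)*(Y*Y) := by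
      have chain : (7/10)*(h*h*h) ≤ KB*(h*h*h)*Y + 5*(P₁*P₃)*(h*h*h)*(Y*Y) :=
        haCl.trans (ineq1.trans (add_le_add hbX hcX))
      nlinarith only [chain, hhh]
    have f2 : (9/10)*(P₁*P₃)*(Y*Y) ≤ 128 + KB*Y := by
      have chain : (9/10)*(P₁*P₃)*(h*h*h)*(Y*Y) ≤ 128*(h*h*h) + KB*(h*h*h)*Y :=
        hcXl.trans (ineq2.trans (add_le_add haCu hbX))
      nlinarith only [chain, hhh]
    have hYl : δ ≤ Y := by
      by_contra hcon
      push_neg at hcon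
      have hY1 : Y ≤ 1 := le_trans hcon.le hδ1
      have hYY : Y*Y ≤ Y := by nlinarith only [hY0, hY1]
      have ha2 : 5*(P₁*P₃)*(Y*Y) ≤ 5*(P₁*P₃)*Y := mul_le_mul_of_nonneg_left hYY (by positivity)
      have hc2 : (KB + 5*(P₁*P₃))*Y < (KB + 5*(P₁*P₃))*δ :=
        mul_lt_mul_of_pos_left hcon (by positivity)
      linarith only [f1, ha2, hc2, hδprod]
    have hUeqY : (9/10)*(P₁*P₃)*δ*U*Y = (128 + KB)*Y := by
      linear_combination ((9/10)*Y) * hUeq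
    have hYU : Y ≤ U := by
      by_contra hcon
      push_neg at hcon
      have hm := mul_lt_mul_of_pos_left hcon (by positivity : (0:ℝ) < (9/10)*(P₁*P₃)*δ*Y)
      have f2δ : δ*((9/10)*(P₁*P₃)*(Y*Y)) ≤ δ*(128 + KB*Y) := mul_le_mul_of_nonneg_left f2 hδ.le
      have h128 : 128*δ ≤ 128*Y := by linarith only [hYl]
      have hKBd : KB*(Y*δ) ≤ KB*Y := by
        nlinarith only [mul_nonneg (mul_nonneg hKB.le hY0.le) (sub_nonneg.2 hδ1)]
      nlinarith only [hm, f2δ, h128, hKBd, hUeqY]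
    have h1' : δ ≤ h ^ ((β₁+β₃)/2) * Real.exp (-(2*ℓ*z.im)/h) := by
      rw [← hXexp, ← hσdef, ← hYdef]
      exact hYl
    have h2' : h ^ ((β₁+β₃)/2) * Real.exp (-(2*ℓ*z.im)/h) ≤ U := by
      rw [← hXexp, ← hσdef, ← hYdef]
      exact hYU
    have him := log_pinch ℓ h ((β₁+β₃)/2) δ U z hℓ hh hδ h1' h2'
    have hRb : (|Real.log δ| + |Real.log U|)/(2*ℓ) ≤ Rim := by
      have q1 : 0 ≤ (|Real.log δ| + |Real.log MB|)/(2*ℓ) := by positivity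
      have q2 : 0 ≤ (|Real.log κ| + |Real.log U|)/(2*ℓ) := by positivity
      rw [hRimdef]
      linarith only [q1, q2]
    have him' : |z.im + ((β₁+β₃)/2/(2*ℓ))*h*Real.log (1/h)| ≤ Rim*h :=
      him.trans (mul_le_mul_of_nonneg_right hRb hh.le)
    obtain ⟨k, hk, hbound⟩ := assemble ℓ h Rim ((β₁+β₃)/2/(2*ℓ)) z hℓ hh hzre him'
    refine ⟨k, hk, Or.inl ?_⟩
    rw [show min (β₂ + min β₁ β₃) ((β₁+β₃)/2) = (β₁+β₃)/2 from min_eq_right hcase]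
    exact hbound
end

section
/- Let I be a nonempty finite index set, let P_i = (ν_i, λ_i) ∈ ℝ² for i ∈ I, let γ > 0, and suppose j, k ∈ I satisfy ν_j + γ λ_j = ν_k + γ λ_k ≤ ν_i + γ λ_i for every i ∈ I. Then the closed segment joining P_j and P_k is contained in the topological frontier of the convex hull of ⋃_{i ∈ I} (P_i + [0,∞)²). -/
/-!
The weight `q ↦ q.1 + γ q.2` is a nonzero continuous linear functional which, for `γ ≥ 0`, is
monotone for the componentwise order, so its minimum `m` over the points `Pᵢ` is also its minimum
over every quadrant `Pᵢ + [0,∞)²` and hence over their convex hull. The segment `[Pⱼ, Pₖ]` lies in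
the hull and on the line where the weight equals `m`; since a nonzero functional is an open map,
the interior of the hull lies in the open half-plane where the weight exceeds `m`.
-/

open Set

theorem mem_frontier_of_subset_preimage_Ici {M : Type*} [TopologicalSpace M] [AddCommGroup M]
    [ContinuousAdd M] [Module ℝ M] [ContinuousSMul ℝ M] {f : StrongDual ℝ M} (hf : f ≠ 0)
    {s : Set M} {m : ℝ} (hs : s ⊆ f ⁻¹' Ici m) {x : M} (hx : x ∈ closure s) (hfx : f x = m) :
    x ∈ frontier s := by
  refine ⟨hx, fun hint => ?_⟩
  have hx_int : x ∈ interior (f ⁻¹' Ici m) := interior_mono hs hint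
  rw [← (f.isOpenMap_of_ne_zero hf).preimage_interior_eq_interior_preimage f.continuous,
    interior_Ici] at hx_int
  exact (ne_of_gt hx_int) hfx

theorem convexHull_iUnion_Ici_subset_preimage_Ici {ι E : Type*} [AddCommGroup E] [PartialOrder E]
    [Module ℝ E] {f : E →ₗ[ℝ] ℝ} (hf : Monotone f) {P : ι → E} {m : ℝ}
    (hm : ∀ i, m ≤ f (P i)) : convexHull ℝ (⋃ i, Ici (P i)) ⊆ f ⁻¹' Ici m :=
  convexHull_min (iUnion_subset fun i _ hq => (hm i).trans (hf hq))
    ((convex_Ici m).linear_preimage f)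

theorem monotone_fst_add_smul_snd {γ : ℝ} (hγ : 0 ≤ γ) :
    Monotone (ContinuousLinearMap.fst ℝ ℝ ℝ + γ • ContinuousLinearMap.snd ℝ ℝ ℝ) :=
  fun _ _ h => add_le_add h.1 (mul_le_mul_of_nonneg_left h.2 hγ)

theorem segment_subset_newton_polygon_general
    {I : Type*} (P : I → ℝ × ℝ) (γ : ℝ) (hγ : 0 < γ)
    (j k : I)
    (heq : (P j).1 + γ * (P j).2 = (P k).1 + γ * (P k).2)
    (hmin : ∀ i, (P j).1 + γ * (P j).2 ≤ (P i).1 + γ * (P i).2) :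
    segment ℝ (P j) (P k) ⊆
      frontier (convexHull ℝ (⋃ i, {q : ℝ × ℝ | (P i).1 ≤ q.1 ∧ (P i).2 ≤ q.2})) := by
  -- `≤` on `ℝ × ℝ` is componentwise, so each quadrant is `Ici (P i)` by definition.
  change segment ℝ (P j) (P k) ⊆ frontier (convexHull ℝ (⋃ i, Ici (P i)))
  set f : StrongDual ℝ (ℝ × ℝ) :=
    ContinuousLinearMap.fst ℝ ℝ ℝ + γ • ContinuousLinearMap.snd ℝ ℝ ℝ
  have hf_ne : f ≠ 0 := fun h => by simpa [f] using congr($h (1, 0))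
  have hhull : convexHull ℝ (⋃ i, Ici (P i)) ⊆ f ⁻¹' Ici (f (P j)) :=
    convexHull_iUnion_Ici_subset_preimage_Ici (f := (f : ℝ × ℝ →ₗ[ℝ] ℝ))
      (monotone_fst_add_smul_snd hγ.le) hmin
  have hseg_hull : segment ℝ (P j) (P k) ⊆ convexHull ℝ (⋃ i, Ici (P i)) :=
    (convex_convexHull ℝ _).segment_subset (subset_convexHull ℝ _ (mem_iUnion_of_mem j self_mem_Ici))
      (subset_convexHull ℝ _ (mem_iUnion_of_mem k self_mem_Ici))
  have hseg_level : segment ℝ (P j) (P k) ⊆ f ⁻¹' {f (P j)} :=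
    ((convex_singleton _).linear_preimage (f : ℝ × ℝ →ₗ[ℝ] ℝ)).segment_subset rfl heq.symm
  exact fun x hx => mem_frontier_of_subset_preimage_Ici hf_ne hhull
    (subset_closure (hseg_hull hx)) (hseg_level hx)

/-- If `νⱼ + γλⱼ = νₖ + γλₖ` is minimal among all `νᵢ + γλᵢ` (with `γ > 0`), then the
segment joining `Pⱼ` and `Pₖ` lies on the frontier of the convex hull of the union of
the translated first quadrants `Pᵢ + [0,∞)²`. -/
theorem segment_subset_newton_polygon
    {I : Type*} [Fintype I] [Nonempty I] (P : I → ℝ × ℝ) (γ : ℝ) (hγ : 0 < γ)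
    (j k : I)
    (heq : (P j).1 + γ * (P j).2 = (P k).1 + γ * (P k).2)
    (hmin : ∀ i, (P j).1 + γ * (P j).2 ≤ (P i).1 + γ * (P i).2) :
    segment ℝ (P j) (P k) ⊆
      frontier (convexHull ℝ (⋃ i, {q : ℝ × ℝ | (P i).1 ≤ q.1 ∧ (P i).2 ≤ q.2})) :=
  segment_subset_newton_polygon_general P γ hγ j k heq hmin
end

section
/- Let n ≥ 1 and let ν₀, …, ν_n and λ₀, …, λ_n be nonnegative real numbers such that ν_j > ν₀ and λ_j < λ₀ for every j ≥ 1. Let M > 0. Let h_m ∈ (0,1) with h_m → 0, let w_m ∈ ℂ \ {0} with |w_m|^{-1} ≤ h_m^{-M}, and for each m let t_{0,m}, …, t_{n,m} be nonzero complex numbers with Σ_{j=0}^{n} t_{j,m} = 0, such that for each j, (log|t_{j,m}| − λ_j log|w_m|) / log h_m → ν_j as m → ∞. Then liminf_{m → ∞} (log|w_m| / log h_m) > 0. -/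
open Filter Topology

/-- Exclusion of nonpositive exponents in the Newton polygon lemma: under the hypotheses
of the lemma, `liminf log|wₘ| / log hₘ > 0`. -/
theorem newton_polygon_liminf_pos
    (n : ℕ) (hn : 1 ≤ n) (ν lam : Fin (n + 1) → ℝ)
    (hν0 : ∀ j, 0 ≤ ν j) (hlam0 : ∀ j, 0 ≤ lam j)
    (hν : ∀ j, j ≠ 0 → ν 0 < ν j) (hlam : ∀ j, j ≠ 0 → lam j < lam 0)
    (M : ℝ) (hM : 0 < M)
    (h : ℕ → ℝ) (hh : ∀ m, h m ∈ Set.Ioo (0 : ℝ) 1) (h0 : Tendsto h atTop (𝓝 0))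
    (w : ℕ → ℂ) (hw : ∀ m, w m ≠ 0)
    (hwM : ∀ m, (‖w m‖)⁻¹ ≤ (h m) ^ (-M))
    (t : Fin (n + 1) → ℕ → ℂ) (ht : ∀ j m, t j m ≠ 0)
    (hsum : ∀ m, ∑ j, t j m = 0)
    (hexp : ∀ j, Tendsto
      (fun m => (Real.log (‖t j m‖) - lam j * Real.log (‖w m‖))
        / Real.log (h m)) atTop (𝓝 (ν j))) :
    0 < Filter.liminf (fun m => Real.log (‖w m‖) / Real.log (h m)) atTop := by
  set L : ℕ → ℝ := fun m => Real.log (‖w m‖) / Real.log (h m) with hLdef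
  have hhpos : ∀ m, 0 < h m := fun m => (hh m).1
  have hlogneg : ∀ m, Real.log (h m) < 0 := fun m => Real.log_neg (hh m).1 (hh m).2
  -- upper bound L m ≤ M
  have hLM : ∀ m, L m ≤ M := by
    intro m
    rw [hLdef]
    rw [div_le_iff_of_neg (hlogneg m)]
    have habspos : 0 < ‖w m‖ := norm_pos_iff.2 (hw m)
    have h1 : Real.log ((‖w m‖)⁻¹) ≤ Real.log ((h m) ^ (-M)) :=
      Real.log_le_log (by positivity) (hwM m)
    rw [Real.log_inv, Real.log_rpow (hhpos m)] at h1
    linarith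
  -- the index 1 is in the erased set
  have h1ne : (1 : Fin (n + 1)) ≠ 0 := by
    intro hc
    have := congrArg Fin.val hc
    rw [Fin.val_one', Nat.mod_eq_of_lt (by omega)] at this
    simp at this
  set s : Finset (Fin (n + 1)) := Finset.univ.erase 0 with hsdef
  have hs : s.Nonempty := ⟨1, Finset.mem_erase.2 ⟨h1ne, Finset.mem_univ _⟩⟩
  have hmem_ne : ∀ j ∈ s, j ≠ 0 := fun j hj => (Finset.mem_erase.1 hj).1
  set δ : ℝ := s.inf' hs (fun j => ν j - ν 0) with hδdef
  have hδ : 0 < δ := by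
    rw [hδdef, Finset.lt_inf'_iff]
    exact fun j hj => sub_pos.2 (hν j (hmem_ne j hj))
  set B : ℝ := s.sup' hs (fun j => lam 0 - lam j) with hBdef
  have hB : 0 < B := by
    rw [hBdef, Finset.lt_sup'_iff]
    exact ⟨1, Finset.mem_erase.2 ⟨h1ne, Finset.mem_univ _⟩, sub_pos.2 (hlam 1 h1ne)⟩
  set ε : ℝ := δ / 6 with hεdef
  have hε : 0 < ε := by positivity
  -- log h m → -∞
  have hlogbot : Tendsto (fun m => Real.log (h m)) atTop atBot := by
    refine Real.tendsto_log_nhdsGT_zero.comp ?_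
    exact tendsto_nhdsWithin_of_tendsto_nhds_of_eventually_within h h0
      (Eventually.of_forall fun m => hhpos m)
  -- eventual estimate: L m ≥ δ / (2 * B)
  have hev : ∀ᶠ m in atTop, δ / (2 * B) ≤ L m := by
    have hE1 : ∀ᶠ m in atTop, ∀ j,
        |(Real.log (‖t j m‖) - lam j * Real.log (‖w m‖))
          / Real.log (h m) - ν j| < ε := by
      rw [eventually_all]
      intro j
      have := (hexp j).eventually (eventually_abs_sub_lt (ν j) hε)
      exact this
    have hE2 : ∀ᶠ m in atTop, Real.log (h m) ≤ -(Real.log n / ε) :=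
      hlogbot.eventually (eventually_le_atBot _)
    filter_upwards [hE1, hE2] with m hm1 hm2
    -- find j ∈ s with |t 0 m| ≤ n * |t j m|
    obtain ⟨j, hjs, hjsup⟩ := s.exists_mem_eq_sup' hs (fun j => ‖t j m‖)
    have hj0 : j ≠ 0 := hmem_ne j hjs
    have hcard : s.card = n := by
      rw [hsdef, Finset.card_erase_of_mem (Finset.mem_univ _), Finset.card_univ,
        Fintype.card_fin]
      omega
    have ht0 : t 0 m = -∑ i ∈ s, t i m := by
      have := hsum m
      rw [← Finset.sum_erase_add Finset.univ _ (Finset.mem_univ (0 : Fin (n + 1)))] at this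
      rw [← hsdef] at this
      linear_combination this
    have habs : ‖t 0 m‖ ≤ n * ‖t j m‖ := by
      rw [ht0, norm_neg]
      calc ‖∑ i ∈ s, t i m‖ ≤ ∑ i ∈ s, ‖t i m‖ :=
            norm_sum_le _ _
        _ ≤ s.card • ‖t j m‖ := by
            refine Finset.sum_le_card_nsmul _ _ _ fun i hi => ?_
            rw [← hjsup]
            exact Finset.le_sup' (fun j => ‖t j m‖) hi
        _ = n * ‖t j m‖ := by rw [hcard, nsmul_eq_mul]
    have habs0 : 0 < ‖t 0 m‖ := norm_pos_iff.2 (ht 0 m)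
    have habsj : 0 < ‖t j m‖ := norm_pos_iff.2 (ht j m)
    have hnpos : (0 : ℝ) < n := by exact_mod_cast hn
    have hlog : Real.log (‖t 0 m‖)
        ≤ Real.log n + Real.log (‖t j m‖) := by
      rw [← Real.log_mul (by positivity) (by positivity)]
      exact Real.log_le_log habs0 habs
    -- divide by log h m (negative)
    have hdiv : (Real.log n + Real.log (‖t j m‖)) / Real.log (h m)
        ≤ Real.log (‖t 0 m‖) / Real.log (h m) :=
      (div_le_div_right_of_neg (hlogneg m)).2 hlog
    rw [add_div] at hdiv
    -- bound the log n / log h term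
    have hlogn_nonneg : 0 ≤ Real.log n := Real.log_nonneg (by exact_mod_cast hn)
    have hterm : -ε ≤ Real.log n / Real.log (h m) := by
      rw [le_div_iff_of_neg (hlogneg m)]
      have hc : ε * (Real.log n / ε) = Real.log n := by field_simp
      nlinarith [mul_le_mul_of_nonneg_left hm2 (le_of_lt hε)]
    -- express a_j in terms of the converging expressions
    have hlne : Real.log (h m) ≠ 0 := ne_of_lt (hlogneg m)
    have haj : ∀ i : Fin (n + 1), Real.log (‖t i m‖) / Real.log (h m)
        = (Real.log (‖t i m‖) - lam i * Real.log (‖w m‖))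
          / Real.log (h m) + lam i * L m := by
      intro i
      rw [hLdef]
      field_simp
      ring
    have h0le : (Real.log (‖t 0 m‖) - lam 0 * Real.log (‖w m‖))
        / Real.log (h m) ≤ ν 0 + ε := by
      have := abs_lt.1 (hm1 0)
      linarith [this.2]
    have hjge : ν j - ε ≤ (Real.log (‖t j m‖) - lam j * Real.log (‖w m‖))
        / Real.log (h m) := by
      have := abs_lt.1 (hm1 j)
      linarith [this.1]
    -- main inequality
    have hkey : ν j - ν 0 - 3 * ε ≤ (lam 0 - lam j) * L m := by
      have e0 := haj 0
      have ej := haj j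
      have : Real.log n / Real.log (h m)
          + ((Real.log (‖t j m‖) - lam j * Real.log (‖w m‖))
              / Real.log (h m) + lam j * L m)
          ≤ (Real.log (‖t 0 m‖) - lam 0 * Real.log (‖w m‖))
              / Real.log (h m) + lam 0 * L m := by
        rw [← e0, ← ej]; exact hdiv
      nlinarith
    have hδj : δ ≤ ν j - ν 0 := by
      rw [hδdef]
      exact Finset.inf'_le _ hjs
    have hlj : 0 < lam 0 - lam j := sub_pos.2 (hlam j hj0)
    have hljB : lam 0 - lam j ≤ B := by
      rw [hBdef]
      exact Finset.le_sup' (fun j => lam 0 - lam j) hjs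
    have hL0 : 0 ≤ L m := by
      by_contra hc
      push_neg at hc
      nlinarith [mul_neg_of_pos_of_neg hlj hc]
    rw [div_le_iff₀ (by positivity : (0:ℝ) < 2 * B)]
    nlinarith [mul_le_mul_of_nonneg_right hljB hL0]
  -- conclude
  have hcb : IsCoboundedUnder (· ≥ ·) atTop L :=
    isBoundedUnder_of ⟨M, hLM⟩ |>.isCoboundedUnder_ge
  calc (0 : ℝ) < δ / (2 * B) := div_pos hδ (by linarith)
    _ ≤ Filter.liminf L atTop := le_liminf_of_le (u := L) (f := atTop) hcb hev
end

section
/- Let N ≥ 2 and work in the multivariate polynomial ring over ℂ in the commuting indeterminates R₁, …, R_N, T₂, …, T_{N−1}, u₁, …, u_{N−1}. Let σ₁, …, σ_{2N−2} ∈ {0, −1} and let M be the 2(N−1) × 2(N−1) matrix whose rows and columns are indexed by the list (1⁻, 1⁺, 2⁻, 2⁺, …, (N−1)⁻, (N−1)⁺), with diagonal entry σ_r in the r-th position, and whose only other nonzero entries are: in row j⁻, the entry R_{j+1} u_j in column j⁺ and (if j ≤ N−2) the entry T_{j+1} u_{j+1} in column (j+1)⁻; and in row j⁺, the entry R_j u_j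 in column j⁻ and (if j ≥ 2) the entry T_j u_{j−1} in column (j−1)⁺. Then every monomial occurring in det M has degree 0 or 2 in each variable u_j; that is, det M = Σ_{α ∈ {0,1}^{N−1}} a_α ∏_{j=1}^{N−1} u_j^{2α_j} for polynomials a_α in the variables R₁, …, R_N, T₂, …, T_{N−1}. -/
open MvPolynomial

/-- Variables of the polynomial ring: `Sum.inl i` is `R_{i+1}` (0-based), `Sum.inr (Sum.inl i)`
is `T_{i+1}` (0-based), and `Sum.inr (Sum.inr i)` is `u_{i+1}` (0-based). -/
abbrev SVar (N : ℕ) := Fin N ⊕ (Fin N ⊕ Fin (N - 1))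

/-- The variable `R_i` (1-based index `i`), or `0` if out of range. -/
noncomputable def vR (N : ℕ) (i : ℕ) : MvPolynomial (SVar N) ℂ :=
  if hi : i - 1 < N ∧ 1 ≤ i then X (Sum.inl ⟨i - 1, hi.1⟩) else 0

/-- The variable `T_i` (1-based index `i`), or `0` if out of range. -/
noncomputable def vT (N : ℕ) (i : ℕ) : MvPolynomial (SVar N) ℂ :=
  if hi : i - 1 < N ∧ 1 ≤ i then X (Sum.inr (Sum.inl ⟨i - 1, hi.1⟩)) else 0

/-- The variable `u_i` (1-based index `i`), or `0` if out of range. -/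
noncomputable def vu (N : ℕ) (i : ℕ) : MvPolynomial (SVar N) ℂ :=
  if hi : i - 1 < N - 1 ∧ 1 ≤ i then X (Sum.inr (Sum.inr ⟨i - 1, hi.1⟩)) else 0

/-- The secular matrix: rows and columns are indexed by `Fin (N-1) × Bool`, where
`(j, false)` is the row/column `(j+1)⁻` and `(j, true)` is `(j+1)⁺` (in 1-based paper
notation `j⁻`, `j⁺` for `j = 1, …, N-1`).  The diagonal entry at position `r` is the
constant `σ r`; in row `j⁻` the only other nonzero entries are `R_{j+1} u_j` in column `j⁺`
and (for `j ≤ N-2`) `T_{j+1} u_{j+1}` in column `(j+1)⁻`; in row `j⁺` they are `R_j u_j`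
in column `j⁻` and (for `j ≥ 2`) `T_j u_{j-1}` in column `(j-1)⁺`. -/
noncomputable def secMatrix (N : ℕ) (σ : Fin (N - 1) × Bool → ℂ) :
    Matrix (Fin (N - 1) × Bool) (Fin (N - 1) × Bool) (MvPolynomial (SVar N) ℂ) :=
  Matrix.of fun r c =>
    if r = c then C (σ r)
    else if r.2 = false ∧ c.2 = true ∧ c.1 = r.1 then
      vR N (r.1.1 + 2) * vu N (r.1.1 + 1)
    else if r.2 = false ∧ c.2 = false ∧ c.1.1 = r.1.1 + 1 then
      vT N (r.1.1 + 2) * vu N (r.1.1 + 2)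
    else if r.2 = true ∧ c.2 = false ∧ c.1 = r.1 then
      vR N (r.1.1 + 1) * vu N (r.1.1 + 1)
    else if r.2 = true ∧ c.2 = true ∧ c.1.1 + 1 = r.1.1 then
      vT N (r.1.1 + 1) * vu N r.1.1
    else 0

set_option maxRecDepth 4000

namespace SecAux

noncomputable def eps (N : ℕ) (j : Fin (N - 1)) : Fin (N - 1) × Bool → ℂ
  | (i, true) => if i.1 ≤ j.1 then 1 else -1
  | (i, false) => if i.1 < j.1 then 1 else -1

lemma eps_sq (N : ℕ) (j : Fin (N - 1)) (r : Fin (N - 1) × Bool) :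
    eps N j r * eps N j r = 1 := by
  obtain ⟨i, _ | _⟩ := r <;> simp only [eps] <;> split_ifs <;> norm_num

lemma vR_eq (N i : ℕ) (h : i - 1 < N) (h1 : 1 ≤ i) :
    vR N i = X (Sum.inl ⟨i - 1, h⟩) := dif_pos ⟨h, h1⟩

lemma vT_eq (N i : ℕ) (h : i - 1 < N) (h1 : 1 ≤ i) :
    vT N i = X (Sum.inr (Sum.inl ⟨i - 1, h⟩)) := dif_pos ⟨h, h1⟩

lemma vu_eq (N i : ℕ) (h : i - 1 < N - 1) (h1 : 1 ≤ i) :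
    vu N i = X (Sum.inr (Sum.inr ⟨i - 1, h⟩)) := dif_pos ⟨h, h1⟩

lemma Xu_congr (N : ℕ) (a : ℕ) (ha : a < N - 1) (b : Fin (N - 1)) (h : a = b.1) :
    (X (Sum.inr (Sum.inr ⟨a, ha⟩)) : MvPolynomial (SVar N) ℂ) = X (Sum.inr (Sum.inr b)) := by
  have : (⟨a, ha⟩ : Fin (N - 1)) = b := Fin.ext h
  rw [this]

lemma secMatrix_structure (N : ℕ) (σ : Fin (N - 1) × Bool → ℂ)
    (r c : Fin (N - 1) × Bool) :
    (r = c ∧ secMatrix N σ r c = C (σ r)) ∨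
    (secMatrix N σ r c = 0) ∨
    ((∃ w : SVar N, (∀ i : Fin (N - 1), w ≠ Sum.inr (Sum.inr i)) ∧
        secMatrix N σ r c = X w * X (Sum.inr (Sum.inr c.1))) ∧
      ∀ j : Fin (N - 1), eps N j r * eps N j c = if c.1 = j then -1 else 1) := by
  obtain ⟨r1, rb⟩ := r
  obtain ⟨c1, cb⟩ := c
  simp only [secMatrix, Matrix.of_apply]
  split_ifs with h1 h2 h3 h4 h5
  · exact Or.inl ⟨h1, rfl⟩
  · obtain ⟨hrb, hcb, hc1⟩ := h2
    replace hrb : rb = false := hrb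
    replace hcb : cb = true := hcb
    have hv : c1.1 = r1.1 := congrArg Fin.val hc1
    subst hrb; subst hcb
    refine Or.inr (Or.inr ⟨⟨Sum.inl ⟨r1.1 + 2 - 1, by have := r1.2; omega⟩, by simp, ?_⟩, ?_⟩)
    · rw [vR_eq N _ (by have := r1.2; omega) (by omega),
        vu_eq N _ (by have := r1.2; omega) (by omega)]
      exact congrArg₂ (· * ·) rfl (Xu_congr N _ _ _ (by omega))
    · intro j
      simp only [eps, Fin.ext_iff]
      split_ifs <;> norm_num <;> omega
  · obtain ⟨hrb, hcb, hc1⟩ := h3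
    replace hrb : rb = false := hrb
    replace hcb : cb = false := hcb
    replace hc1 : c1.1 = r1.1 + 1 := hc1
    subst hrb; subst hcb
    refine Or.inr (Or.inr ⟨⟨Sum.inr (Sum.inl ⟨r1.1 + 2 - 1, by have := r1.2; omega⟩),
      by simp, ?_⟩, ?_⟩)
    · rw [vT_eq N _ (by have := r1.2; omega) (by omega),
        vu_eq N _ (by have := c1.2; omega) (by omega)]
      exact congrArg₂ (· * ·) rfl (Xu_congr N _ _ _ (by omega))
    · intro j
      simp only [eps, Fin.ext_iff]
      split_ifs <;> norm_num <;> omega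
  · obtain ⟨hrb, hcb, hc1⟩ := h4
    replace hrb : rb = true := hrb
    replace hcb : cb = false := hcb
    have hv : c1.1 = r1.1 := congrArg Fin.val hc1
    subst hrb; subst hcb
    refine Or.inr (Or.inr ⟨⟨Sum.inl ⟨r1.1 + 1 - 1, by have := r1.2; omega⟩, by simp, ?_⟩, ?_⟩)
    · rw [vR_eq N _ (by have := r1.2; omega) (by omega),
        vu_eq N _ (by have := r1.2; omega) (by omega)]
      exact congrArg₂ (· * ·) rfl (Xu_congr N _ _ _ (by omega))
    · intro j
      simp only [eps, Fin.ext_iff]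
      split_ifs <;> norm_num <;> omega
  · obtain ⟨hrb, hcb, hc1⟩ := h5
    replace hrb : rb = true := hrb
    replace hcb : cb = true := hcb
    replace hc1 : c1.1 + 1 = r1.1 := hc1
    subst hrb; subst hcb
    refine Or.inr (Or.inr ⟨⟨Sum.inr (Sum.inl ⟨r1.1 + 1 - 1, by have := r1.2; omega⟩),
      by simp, ?_⟩, ?_⟩)
    · rw [vT_eq N _ (by have := r1.2; omega) (by omega),
        vu_eq N _ (by have := c1.2; omega) (by have := c1.2; omega)]
      exact congrArg₂ (· * ·) rfl (Xu_congr N _ _ _ (by omega))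
    · intro j
      simp only [eps, Fin.ext_iff]
      split_ifs <;> norm_num <;> omega
  · exact Or.inr (Or.inl rfl)

noncomputable def sflip (N : ℕ) (j : Fin (N - 1)) :
    MvPolynomial (SVar N) ℂ →ₐ[ℂ] MvPolynomial (SVar N) ℂ :=
  aeval (fun v => if v = Sum.inr (Sum.inr j) then -X v else X v)

lemma sflip_X (N : ℕ) (j : Fin (N - 1)) (v) :
    sflip N j (X v) = if v = Sum.inr (Sum.inr j) then -X v else X v := by
  simp [sflip]

lemma sflip_C (N : ℕ) (j : Fin (N - 1)) (a : ℂ) : sflip N j (C a) = C a := by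
  simp [sflip, algebraMap_eq]

lemma sflip_monomial (N : ℕ) (j : Fin (N - 1)) (m) (a : ℂ) :
    sflip N j (monomial m a) =
      (-1 : MvPolynomial (SVar N) ℂ) ^ (m (Sum.inr (Sum.inr j))) *
        monomial m a := by
  classical
  rw [sflip, aeval_monomial]
  have h1 : (m.prod fun v e =>
      (if v = Sum.inr (Sum.inr j) then -X v else X v : MvPolynomial (SVar N) ℂ) ^ e)
      = (-1) ^ (m (Sum.inr (Sum.inr j))) * m.prod fun v e => (X v) ^ e := by
    rw [Finsupp.prod, Finsupp.prod,
      Finset.prod_congr rfl (fun v _ => show _ = (if v = Sum.inr (Sum.inr j)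
          then ((-1 : MvPolynomial (SVar N) ℂ)) ^ (m v) else 1) * X v ^ m v
        from by split_ifs with h; exact neg_pow _ _; exact (one_mul _).symm),
      Finset.prod_mul_distrib]
    congr 1
    rw [Finset.prod_ite_eq']
    split_ifs with h
    · rfl
    · rw [Finsupp.notMem_support_iff.mp h, pow_zero]
  rw [h1, monomial_eq]
  show C a * _ = _
  ring


lemma sflip_coeff (N : ℕ) (j : Fin (N - 1)) (p : MvPolynomial (SVar N) ℂ) (m) :
    coeff m (sflip N j p) = (-1 : ℂ) ^ (m (Sum.inr (Sum.inr j))) * coeff m p := by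
  induction p using MvPolynomial.induction_on' with
  | monomial m' a =>
    rw [sflip_monomial]
    have hc : ((-1 : MvPolynomial (SVar N) ℂ)) ^ (m' (Sum.inr (Sum.inr j)))
        = C ((-1 : ℂ) ^ (m' (Sum.inr (Sum.inr j)))) := by
      rw [map_pow, map_neg, map_one]
    rw [hc, coeff_C_mul, coeff_monomial]
    by_cases h : m' = m
    · subst h; rfl
    · simp [h]
  | add p q hp hq => rw [map_add, coeff_add, hp, hq, coeff_add]; ring

lemma sflip_secMatrix (N : ℕ) (σ : Fin (N - 1) × Bool → ℂ) (j : Fin (N - 1))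
    (r c : Fin (N - 1) × Bool) :
    sflip N j (secMatrix N σ r c) = C (eps N j r) * secMatrix N σ r c * C (eps N j c) := by
  rcases secMatrix_structure N σ r c with ⟨hrc, h⟩ | h | ⟨⟨w, hw, h⟩, heps⟩
  · subst hrc
    rw [h, sflip_C, ← map_mul, ← map_mul]
    congr 1
    symm
    calc eps N j r * σ r * eps N j r = σ r * (eps N j r * eps N j r) := by ring
    _ = σ r := by rw [eps_sq, mul_one]
  · rw [h, map_zero]; ring
  · rw [h, map_mul, sflip_X, sflip_X, if_neg (hw j)]
    have key : C (eps N j r) * (X w * X (Sum.inr (Sum.inr c.1))) * C (eps N j c)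
        = C (eps N j r * eps N j c) * (X w * X (Sum.inr (Sum.inr c.1))) := by
      rw [map_mul]; ring
    rw [key, heps j]
    by_cases hcj : c.1 = j
    · rw [if_pos hcj, if_pos (by rw [hcj]), map_neg, map_one]
      ring
    · rw [if_neg hcj, if_neg (fun hh => hcj (Sum.inr_injective (Sum.inr_injective hh)))]
      rw [map_one]; ring

lemma sflip_det (N : ℕ) (σ : Fin (N - 1) × Bool → ℂ) (j : Fin (N - 1)) :
    sflip N j ((secMatrix N σ).det) = (secMatrix N σ).det := by
  rw [AlgHom.map_det, AlgHom.mapMatrix_apply]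
  have hmap : (secMatrix N σ).map (sflip N j) =
      Matrix.diagonal (fun r => C (eps N j r)) * secMatrix N σ *
        Matrix.diagonal (fun r => C (eps N j r)) := by
    ext r c
    simp only [Matrix.map_apply, Matrix.mul_diagonal, Matrix.diagonal_mul]
    rw [sflip_secMatrix]
  rw [hmap, Matrix.det_mul, Matrix.det_mul, Matrix.det_diagonal]
  have hsq : ((∏ r, C (eps N j r)) : MvPolynomial (SVar N) ℂ) *
      ((∏ r, C (eps N j r)) : MvPolynomial (SVar N) ℂ) = 1 := by
    rw [← Finset.prod_mul_distrib,
      Finset.prod_congr rfl (fun r _ => by rw [← map_mul, eps_sq, map_one])]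
    exact Finset.prod_const_one
  calc (∏ r, C (eps N j r)) * (secMatrix N σ).det * (∏ r, C (eps N j r))
      = (secMatrix N σ).det * ((∏ r, C (eps N j r)) * (∏ r, C (eps N j r))) := by ring
  _ = (secMatrix N σ).det := by rw [hsq, mul_one]


lemma degreeOf_entry (N : ℕ) (σ : Fin (N - 1) × Bool → ℂ) (j : Fin (N - 1))
    (r c : Fin (N - 1) × Bool) :
    degreeOf (Sum.inr (Sum.inr j) : SVar N) (secMatrix N σ r c) ≤
      if c.1 = j then 1 else 0 := by
  classical
  rcases secMatrix_structure N σ r c with ⟨_, h⟩ | h | ⟨⟨w, hw, h⟩, _⟩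
  · rw [h, degreeOf_C]; exact Nat.zero_le _
  · rw [h, degreeOf_zero]; exact Nat.zero_le _
  · rw [h]
    refine le_trans (degreeOf_mul_le _ _ _) ?_
    rw [degreeOf_X, degreeOf_X, if_neg (fun hh => hw j hh.symm)]
    simp only [Sum.inr.injEq]
    by_cases hcj : c.1 = j
    · rw [if_pos hcj.symm, if_pos hcj]
    · rw [if_neg (fun hh => hcj hh.symm), if_neg hcj]

lemma degreeOf_det_le (N : ℕ) (σ : Fin (N - 1) × Bool → ℂ) (j : Fin (N - 1)) :
    degreeOf (Sum.inr (Sum.inr j) : SVar N) (secMatrix N σ).det ≤ 2 := by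
  classical
  rw [Matrix.det_apply']
  refine le_trans (degreeOf_sum_le _ _ _) (Finset.sup_le fun π _ => ?_)
  refine le_trans (degreeOf_mul_le _ _ _) ?_
  have h1 : degreeOf (Sum.inr (Sum.inr j) : SVar N)
      ((Equiv.Perm.sign π : ℤ) : MvPolynomial (SVar N) ℂ) = 0 := by
    rw [← map_intCast (C : ℂ →+* MvPolynomial (SVar N) ℂ), degreeOf_C]
  rw [h1, zero_add]
  refine le_trans (degreeOf_prod_le _ _ _) ?_
  refine le_trans (Finset.sum_le_sum fun c _ => degreeOf_entry N σ j (π c) c) ?_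
  have hsum : ∀ a : Fin (N - 1),
      (∑ b : Bool, if ((a, b) : Fin (N - 1) × Bool).1 = j then 1 else 0) =
        if a = j then 2 else 0 := by
    intro a
    rw [Fintype.sum_bool]
    split_ifs <;> rfl
  rw [Fintype.sum_prod_type, Finset.sum_congr rfl (fun a _ => hsum a),
    Finset.sum_ite_eq' Finset.univ j (fun _ => 2)]
  simp

lemma det_support_even (N : ℕ) (σ : Fin (N - 1) × Bool → ℂ) (m : SVar N →₀ ℕ)
    (hm : m ∈ (secMatrix N σ).det.support) (j : Fin (N - 1)) :
    m (Sum.inr (Sum.inr j)) = 0 ∨ m (Sum.inr (Sum.inr j)) = 2 := by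
  have hlt : m (Sum.inr (Sum.inr j)) < 3 := by
    have h3 := lt_of_le_of_lt (degreeOf_det_le N σ j) (by norm_num : (2:ℕ) < 3)
    exact (degreeOf_lt_iff (by norm_num)).mp h3 m hm
  have hne : coeff m (secMatrix N σ).det ≠ 0 := mem_support_iff.mp hm
  have heq := sflip_coeff N j (secMatrix N σ).det m
  rw [sflip_det] at heq
  rcases Nat.even_or_odd (m (Sum.inr (Sum.inr j))) with he | ho
  · obtain ⟨t, ht⟩ := he; omega
  · exfalso
    rw [ho.neg_one_pow] at heq
    apply hne
    have h2 : (2 : ℂ) * coeff m (secMatrix N σ).det = 0 := by linear_combination heq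
    exact (mul_eq_zero.mp h2).resolve_left two_ne_zero

end SecAux

/-- Lemma (form of the secular determinant): for diagonal entries `σ r ∈ {0, -1}`, every
monomial of `det (secMatrix N σ)` has degree `0` or `2` in each variable `u_j`; that is,
the determinant is `Σ_{α ∈ {0,1}^{N-1}} a_α Π_j u_j^{2α_j}` with each `a_α` a polynomial
in the `R`'s and `T`'s only. -/


theorem secular_determinant_even_powers (N : ℕ) (hN : 2 ≤ N)
    (σ : Fin (N - 1) × Bool → ℂ) (hσ : ∀ r, σ r = 0 ∨ σ r = -1) :
    (∀ m ∈ (secMatrix N σ).det.support, ∀ j : Fin (N - 1),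
      m (Sum.inr (Sum.inr j)) = 0 ∨ m (Sum.inr (Sum.inr j)) = 2) ∧
    ∃ a : (Fin (N - 1) → Bool) → MvPolynomial (SVar N) ℂ,
      (∀ α, ∀ m ∈ (a α).support, ∀ j : Fin (N - 1), m (Sum.inr (Sum.inr j)) = 0) ∧
      (secMatrix N σ).det =
        ∑ α : Fin (N - 1) → Bool, a α *
          ∏ j : Fin (N - 1),
            (X (Sum.inr (Sum.inr j)) : MvPolynomial (SVar N) ℂ) ^ (if α j then 2 else 0) := by
  classical
  refine ⟨fun m hm j => SecAux.det_support_even N σ m hm j, ?_⟩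
  set p := (secMatrix N σ).det with hpdef
  set pat : (SVar N →₀ ℕ) → (Fin (N - 1) → Bool) :=
    fun m j => decide (m (Sum.inr (Sum.inr j)) = 2) with hpat
  set q : SVar N → Prop := fun v => ∀ i : Fin (N - 1), v ≠ Sum.inr (Sum.inr i) with hq
  refine ⟨fun α => ∑ m ∈ p.support.filter (fun m => pat m = α),
      monomial (m.filter q) (coeff m p), ?_, ?_⟩
  · intro α m' hm' j
    obtain ⟨m, hmf, hmm⟩ := Finset.mem_biUnion.mp (support_sum hm')
    have hm'eq : m' = m.filter q := Finset.mem_singleton.mp (support_monomial_subset hmm)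
    rw [hm'eq, Finsupp.filter_apply, if_neg (fun hq' => hq' j rfl)]
  · conv_lhs => rw [p.as_sum]
    rw [← Finset.sum_fiberwise_of_maps_to (t := Finset.univ) (g := pat)
      (fun m _ => Finset.mem_univ _) (fun m => monomial m (coeff m p))]
    refine Finset.sum_congr rfl fun α _ => ?_
    rw [Finset.sum_mul]
    refine Finset.sum_congr rfl fun m hm => ?_
    obtain ⟨hm1, hm2⟩ := Finset.mem_filter.mp hm
    have hexp : ∀ j : Fin (N - 1), (if α j then 2 else 0) = m (Sum.inr (Sum.inr j)) := by
      intro j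
      rcases SecAux.det_support_even N σ m hm1 j with h0 | h2
      · rw [← hm2, h0]; simp [hpat, h0]
      · rw [← hm2, h2]; simp [hpat, h2]
    rw [Finset.prod_congr rfl (fun j _ => by rw [hexp j])]
    have hdj : ∀ j : Fin (N - 1),
        (m.filter (fun v => ¬ q v)) (Sum.inr (Sum.inr j)) = m (Sum.inr (Sum.inr j)) :=
      fun j => by rw [Finsupp.filter_apply, if_pos (fun hq' => hq' j rfl)]
    have huf : (∏ j : Fin (N - 1),
        (X (Sum.inr (Sum.inr j)) : MvPolynomial (SVar N) ℂ) ^ (m (Sum.inr (Sum.inr j))))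
        = monomial (m.filter (fun v => ¬ q v)) 1 := by
      rw [monomial_eq, C_1, one_mul, Finsupp.prod]
      have hsub : (m.filter (fun v => ¬ q v)).support ⊆
          Finset.univ.image (fun i : Fin (N - 1) => (Sum.inr (Sum.inr i) : SVar N)) := by
        intro v hv
        rw [Finsupp.support_filter, Finset.mem_filter] at hv
        have : ¬ ∀ i : Fin (N - 1), v ≠ Sum.inr (Sum.inr i) := hv.2
        push_neg at this
        obtain ⟨i, hi⟩ := this
        exact Finset.mem_image.mpr ⟨i, Finset.mem_univ _, hi.symm⟩
      rw [Finset.prod_subset hsub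
        (fun v _ hv => by rw [Finsupp.notMem_support_iff.mp hv, pow_zero])]
      rw [Finset.prod_image (fun i _ i' _ h =>
        Sum.inr_injective (Sum.inr_injective h) : ∀ i ∈ Finset.univ, ∀ i' ∈ Finset.univ,
          (Sum.inr (Sum.inr i) : SVar N) = Sum.inr (Sum.inr i') → i = i')]
      exact Finset.prod_congr rfl fun j _ => by rw [hdj j]
    rw [huf, monomial_mul, Finsupp.filter_pos_add_filter_neg, mul_one]
end

section
/- Let N ≥ 2 and work in the multivariate polynomial ring over ℂ in the commuting indeterminates R₁, …, R_N, T₂, …, T_{N−1}, u₁, …, u_{N−1}. Let M be the 2(N−1) × 2(N−1) matrix whose rows and columns are indexed by the list (1⁻, 1⁺, 2⁻, 2⁺, …, (N−1)⁻, (N−1)⁺), with every diagonal entry equal to −1, and whose only other nonzero entries are: in row j⁻, the entry R_{j+1} u_j in column j⁺ and (if j ≤ N−2) the entry T_{j+1} u_{j+1} in column (j+1)⁻; and in row j⁺, the entry R_j u_j in column j⁻ and (if j ≥ 2) the entry T_j u_{j−1} in column (j−1)⁺. Then the coefficient of the constant monomial in det M equals 1, and every non-constant monomial occurring in det M has positive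 degree in at least one of the variables R₁, …, R_N and positive degree in at least one of the variables u₁, …, u_{N−1}. -/
open MvPolynomial

/-!
Setting every `u_j` to zero turns the matrix into `-I`; setting every `R_i` to zero leaves only
the transmission entries off the diagonal, and the matrix becomes triangular with diagonal `-1`.
Both specializations of the determinant are therefore `(-1)^(2(N-1)) = 1`. Since killing a set of variables keeps exactly
the monomials avoiding them, the constant coefficient of the determinant is `1`, and any other
monomial that avoided all `u_j` (or all `R_i`) would survive in a specialization equal to `1`.
-/

theorem Matrix.BlockTriangular.det_eq_prod_diag_of_injective {m α R : Type*} [Fintype m]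
    [DecidableEq m] [CommRing R] [LinearOrder α] {M : Matrix m m R} {b : m → α}
    (hM : M.BlockTriangular b) (hb : Function.Injective b) : M.det = ∏ i, M i i :=
  letI := LinearOrder.lift' b hb
  Matrix.det_of_isUpperTriangular hM

namespace MvPolynomial

variable {σ R : Type*} [CommSemiring R] {s : Set σ}

noncomputable def killVars (s : Set σ) : MvPolynomial σ R →ₐ[R] MvPolynomial σ R :=
  aeval (sᶜ.indicator X)

theorem killVars_X_of_mem {v : σ} (hv : v ∈ s) : killVars s (X v : MvPolynomial σ R) = 0 := by
  rw [killVars, aeval_X, Set.indicator_of_notMem (Set.notMem_compl_iff.mpr hv)]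

theorem coeff_killVars_monomial {m n : σ →₀ ℕ} (hm : ∀ v ∈ s, m v = 0) (c : R) :
    coeff m (killVars s (monomial n c)) = coeff m (monomial n c) := by
  classical
  rw [killVars, aeval_monomial, algebraMap_eq]
  by_cases hn : ∀ v ∈ s, n v = 0
  · rw [monomial_eq, Finsupp.prod, Finsupp.prod]
    refine congrArg (coeff m <| C c * ·) (Finset.prod_congr rfl fun v hv => ?_)
    rw [Set.indicator_of_mem <| Set.mem_compl fun hvs => Finsupp.mem_support_iff.mp hv (hn v hvs)]
  · push Not at hn
    obtain ⟨v, hvs, hv⟩ := hn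
    have hmn : n ≠ m := fun h => hv (h ▸ hm v hvs)
    have hfactor : sᶜ.indicator X v ^ n v = (0 : MvPolynomial σ R) := by
      rw [Set.indicator_of_notMem (Set.notMem_compl_iff.mpr hvs), zero_pow hv]
    rw [Finsupp.prod, Finset.prod_eq_zero (Finsupp.mem_support_iff.mpr hv) hfactor, mul_zero,
      coeff_zero, coeff_monomial, if_neg hmn]

theorem coeff_killVars {m : σ →₀ ℕ} (hm : ∀ v ∈ s, m v = 0) (p : MvPolynomial σ R) :
    coeff m (killVars s p) = coeff m p := by
  induction p using MvPolynomial.induction_on' with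
  | monomial n c => exact coeff_killVars_monomial hm c
  | add p q hp hq => rw [map_add, coeff_add, coeff_add, hp, hq]

theorem coeff_zero_of_killVars_eq_C {p : MvPolynomial σ R} {a : R} (h : killVars s p = C a) :
    coeff 0 p = a := by
  rw [← coeff_killVars (fun _ _ => rfl), h, coeff_zero_C]

theorem exists_pos_of_killVars_eq_C {p : MvPolynomial σ R} {a : R} (h : killVars s p = C a)
    {m : σ →₀ ℕ} (hm : m ∈ p.support) (hm0 : m ≠ 0) : ∃ v ∈ s, 0 < m v := by
  classical
  by_contra! hs
  refine mem_support_iff.mp hm ?_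
  rw [← coeff_killVars fun v hv => Nat.le_zero.mp (hs v hv), h, coeff_C, if_neg (Ne.symm hm0)]

end MvPolynomial

section SecularMatrix

variable (N : ℕ) (σ : Fin (N - 1) × Bool → ℂ)

def reflectionVars : Set (SVar N) := Set.range Sum.inl

def phaseVars : Set (SVar N) := Set.range fun j => Sum.inr (Sum.inr j)

theorem killVars_reflectionVars_vR (i : ℕ) : killVars (reflectionVars N) (vR N i) = 0 := by
  unfold vR
  split_ifs
  · exact killVars_X_of_mem ⟨_, rfl⟩
  · exact map_zero _

theorem killVars_phaseVars_vu (i : ℕ) : killVars (phaseVars N) (vu N i) = 0 := by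
  unfold vu
  split_ifs
  · exact killVars_X_of_mem ⟨_, rfl⟩
  · exact map_zero _

theorem secMatrix_apply_self (r : Fin (N - 1) × Bool) : secMatrix N σ r r = C (σ r) :=
  if_pos rfl

theorem secMatrix_map_killVars_phaseVars :
    (secMatrix N σ).map (killVars (phaseVars N)) = Matrix.diagonal (C ∘ σ) := by
  ext r c
  rw [Matrix.map_apply]
  obtain rfl | hrc := eq_or_ne r c
  · rw [secMatrix_apply_self, Matrix.diagonal_apply_eq, algHom_C, algebraMap_eq, Function.comp]
  · rw [Matrix.diagonal_apply_ne _ hrc, secMatrix, Matrix.of_apply, if_neg hrc]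
    split_ifs <;> simp only [map_mul, killVars_phaseVars_vu, mul_zero, map_zero]

def secWeight (r : Fin (N - 1) × Bool) : ℕ := if r.2 then 2 * N - r.1 else r.1

theorem secWeight_injective : Function.Injective (secWeight N) := by
  rintro ⟨⟨a, ha⟩, _ | _⟩ ⟨⟨b, hb⟩, _ | _⟩ h <;>
    simp only [secWeight, Bool.false_eq_true, if_true, if_false] at h <;> simp <;> omega

/-- Once the `R_i` vanish, only the transmission entries `j⁻ → (j+1)⁻` and `j⁺ → (j-1)⁺` survive
off the diagonal, so the matrix is upper triangular for `1⁻ < ⋯ < (N-1)⁻ < (N-1)⁺ < ⋯ < 1⁺`. -/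
theorem blockTriangular_secMatrix_map_killVars_reflectionVars :
    ((secMatrix N σ).map (killVars (reflectionVars N))).BlockTriangular (secWeight N) := by
  rintro r c hcr
  have hrc : r ≠ c := by rintro rfl; exact lt_irrefl _ hcr
  have hr := r.1.2
  have hc := c.1.2
  rw [Matrix.map_apply, secMatrix, Matrix.of_apply, if_neg hrc]
  simp only [secWeight] at hcr
  split_ifs with h₁ h₂ h₃ h₄
  · rw [map_mul, killVars_reflectionVars_vR, zero_mul]
  · simp only [h₂.1, h₂.2.1, Bool.false_eq_true, ↓reduceIte] at hcr; omega
  · rw [map_mul, killVars_reflectionVars_vR, zero_mul]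
  · simp only [h₄.1, h₄.2.1, ↓reduceIte] at hcr; omega
  · exact map_zero _

theorem killVars_phaseVars_det_secMatrix :
    killVars (phaseVars N) (secMatrix N σ).det = C (∏ r, σ r) := by
  rw [AlgHom.map_det, AlgHom.mapMatrix_apply, secMatrix_map_killVars_phaseVars,
    Matrix.det_diagonal, map_prod]
  rfl

theorem killVars_reflectionVars_det_secMatrix :
    killVars (reflectionVars N) (secMatrix N σ).det = C (∏ r, σ r) := by
  rw [AlgHom.map_det, AlgHom.mapMatrix_apply,
    (blockTriangular_secMatrix_map_killVars_reflectionVars N σ).det_eq_prod_diag_of_injective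
      (secWeight_injective N), map_prod]
  refine Finset.prod_congr rfl fun r _ => ?_
  rw [Matrix.map_apply, secMatrix_apply_self, algHom_C, algebraMap_eq]

end SecularMatrix

theorem secular_determinant_constant_term_and_reflection_general (N : ℕ) :
    MvPolynomial.coeff 0 (secMatrix N fun _ => (-1 : ℂ)).det = 1 ∧
    ∀ m ∈ (secMatrix N fun _ => (-1 : ℂ)).det.support, m ≠ 0 →
      (∃ i : Fin N, 0 < m (Sum.inl i)) ∧ (∃ j : Fin (N - 1), 0 < m (Sum.inr (Sum.inr j))) := by
  have hphase := killVars_phaseVars_det_secMatrix N fun _ => -1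
  have hrefl := killVars_reflectionVars_det_secMatrix N fun _ => -1
  have hsign : ∏ _r : Fin (N - 1) × Bool, (-1 : ℂ) = 1 := by
    simp [Finset.prod_const, pow_mul']
  refine ⟨(coeff_zero_of_killVars_eq_C hphase).trans hsign, fun m hm hm0 => ⟨?_, ?_⟩⟩
  · obtain ⟨_, ⟨i, rfl⟩, hi⟩ := exists_pos_of_killVars_eq_C hrefl hm hm0
    exact ⟨i, hi⟩
  · obtain ⟨_, ⟨j, rfl⟩, hj⟩ := exists_pos_of_killVars_eq_C hphase hm hm0
    exact ⟨j, hj⟩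

/-- Lemma: in the secular determinant `det (A_N - I)` (all diagonal entries `-1`), the
constant monomial has coefficient `1`, and every non-constant monomial contains at least
one reflection variable `R_i` and at least one variable `u_j`. -/
theorem secular_determinant_constant_term_and_reflection (N : ℕ) (hN : 2 ≤ N) :
    MvPolynomial.coeff 0 (secMatrix N fun _ => (-1 : ℂ)).det = 1 ∧
    ∀ m ∈ (secMatrix N fun _ => (-1 : ℂ)).det.support, m ≠ 0 →
      (∃ i : Fin N, 0 < m (Sum.inl i)) ∧ (∃ j : Fin (N - 1), 0 < m (Sum.inr (Sum.inr j))) :=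
  secular_determinant_constant_term_and_reflection_general N
end
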